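/- arXiv:1510.01141 — 9 statements merged into one kernel-verified Lean document; each statement's English description precedes it below -/
import Mathlib

section
/- Let K be a field, t ≥ 1 an integer, and let a_1,…,a_t, a_1',…,a_t', b_1,…,b_t, b_1',…,b_t' ∈ K satisfy a_i ≠ 0 and a_i' ≠ 0 for all i, and a_i a_j' − a_i' a_j ≠ 0 for all i ≠ j. Then Π_{i=1}^t a_i b_i − Π_{i=1}^t a_i' b_i' = Σ_{i=1}^t ( Π_{j=1}^t (a_i b_j − a_i' b_j') ) · Π_{1 ≤ j ≤ t, j ≠ i} (a_i/a_j − a_i'/a_j')^{−1}. -/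
/-! Put `c i = a' i / a i`. After factoring out `∏ i, a i`, the identity is Lagrange interpolation
at `0`, with nodes `c i`, of `P(x) = ∏ j, (b j - x * b' j)` minus its top-degree part
`(∏ j, -b' j) * ∏ j, (x - c j)`: this difference has degree `< t` and takes the value
`∏ j, (b j - c i * b' j)` at `c i`. -/

open Polynomial Finset

namespace Lagrange

variable {F ι : Type*} [Field F] [DecidableEq ι] {s : Finset ι} {v : ι → F}

theorem sub_C_coeff_mul_nodal_eq_interpolate (hvs : Set.InjOn v s) {P : F[X]}
    (hP : P.natDegree ≤ #s) :
    P - C (P.coeff #s) * nodal s v = interpolate s v fun i => P.eval (v i) := by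
  refine eq_interpolate_of_eval_eq _ hvs ?_ fun i hi => by simp [eval_nodal_at_node hi]
  have hnodal : (nodal s v).natDegree = #s := natDegree_nodal
  rw [degree_lt_iff_coeff_zero]
  intro m hm
  rcases hm.eq_or_lt with rfl | hm
  · rw [coeff_sub, coeff_C_mul, ← hnodal, nodal_monic.coeff_natDegree, mul_one, sub_self]
  · have hPm : P.coeff m = 0 := coeff_eq_zero_of_natDegree_lt (hP.trans_lt hm)
    have hnodalm : (nodal s v).coeff m = 0 := coeff_eq_zero_of_natDegree_lt (hnodal ▸ hm)
    rw [coeff_sub, coeff_C_mul, hPm, hnodalm, mul_zero, sub_zero]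

theorem eval_sub_coeff_mul_prod_eq_sum (hvs : Set.InjOn v s) {P : F[X]}
    (hP : P.natDegree ≤ #s) (x : F) :
    P.eval x - P.coeff #s * ∏ j ∈ s, (x - v j)
      = ∑ i ∈ s, P.eval (v i) * ∏ j ∈ s.erase i, (x - v j) / (v i - v j) := by
  have h := congrArg (eval x) (sub_C_coeff_mul_nodal_eq_interpolate hvs hP)
  simp only [eval_sub, eval_mul, eval_C, eval_nodal] at h
  rw [h, interpolate_apply, eval_finsetSum]
  refine sum_congr rfl fun i _ => ?_
  simp [Lagrange.basis, basisDivisor, eval_prod, div_eq_inv_mul]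

end Lagrange

theorem prod_sub_prod_mul_eq_sum {K ι : Type*} [Field K] [Fintype ι] [DecidableEq ι] {c : ι → K}
    (hc : Function.Injective c) (b b' : ι → K) :
    ∏ j, b j - ∏ j, c j * b' j
      = ∑ i, (∏ j, (b j - c i * b' j)) * ∏ j ∈ univ.erase i, c j / (c j - c i) := by
  set P : K[X] := ∏ j, (C (b j) - C (b' j) * X)
  have hlin : ∀ j, (C (b j) - C (b' j) * X).natDegree ≤ 1 := fun j => by compute_degree
  have hP : P.natDegree ≤ #(univ : Finset ι) :=
    (natDegree_prod_le _ _).trans <|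
      (sum_le_card_nsmul _ _ 1 fun j _ => hlin j).trans_eq (mul_one _)
  have hPcoeff : P.coeff #(univ : Finset ι) = ∏ j, -b' j := by
    rw [← mul_one #univ, coeff_prod_of_natDegree_le (s := univ) _ 1 fun j _ => hlin j]
    refine prod_congr rfl fun j _ => ?_
    rw [coeff_sub, coeff_C_mul, coeff_X_one, coeff_C, if_neg one_ne_zero, zero_sub, mul_one]
  have hPeval : ∀ x, P.eval x = ∏ j, (b j - x * b' j) := fun x => by
    simp only [P, eval_prod, eval_sub, eval_mul, eval_C, eval_X]
    exact prod_congr rfl fun j _ => by ring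
  calc ∏ j, b j - ∏ j, c j * b' j = P.eval 0 - P.coeff #univ * ∏ j, (0 - c j) := by
        rw [hPcoeff, hPeval, ← prod_mul_distrib]
        congr 1 <;> exact prod_congr rfl fun j _ => by ring
    _ = ∑ i, P.eval (c i) * ∏ j ∈ univ.erase i, (0 - c j) / (c i - c j) :=
        Lagrange.eval_sub_coeff_mul_prod_eq_sum hc.injOn hP 0
    _ = _ := sum_congr rfl fun i _ => by
        rw [hPeval]
        congr 1
        exact prod_congr rfl fun j _ => by rw [← neg_div_neg_eq, zero_sub, neg_neg, neg_sub]

theorem mul_inv_div_sub_div_eq {K : Type*} [Field K] {x y x' y' : K} (hx : x ≠ 0) (hy : y ≠ 0)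
    (hy' : y' ≠ 0) (h : x * y' - x' * y ≠ 0) :
    x * (x / y - x' / y')⁻¹ = y * (y' / y / (y' / y - x' / x)) := by
  have h' : y' * x - x' * y ≠ 0 := by rwa [mul_comm y']
  field_simp

theorem prod_sub_prod_eq_sum_general {K : Type*} [Field K] (t : ℕ)
    (a a' b b' : Fin t → K)
    (ha : ∀ i, a i ≠ 0) (ha' : ∀ i, a' i ≠ 0)
    (hnd : ∀ i j : Fin t, i ≠ j → a i * a' j - a' i * a j ≠ 0) :
    ∏ i, a i * b i - ∏ i, a' i * b' i
      = ∑ i, (∏ j, (a i * b j - a' i * b' j))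
          * ∏ j ∈ Finset.univ.erase i, (a i / a j - a' i / a' j)⁻¹ := by
  set c : Fin t → K := fun i => a' i / a i
  have ha'_eq : ∀ i, a' i = a i * c i := fun i => (mul_div_cancel₀ (a' i) (ha i)).symm
  have hc : Function.Injective c := fun i j hij => by
    by_contra hne
    rw [div_eq_div_iff (ha i) (ha j)] at hij
    exact hnd i j hne (by linear_combination -hij)
  have hrow : ∀ i, ∏ j, (a i * b j - a' i * b' j)
      = (∏ _j : Fin t, a i) * ∏ j, (b j - c i * b' j) :=
    fun i => by rw [← prod_mul_distrib, ha'_eq]; exact prod_congr rfl fun j _ => by ring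
  have hweight : ∀ i, (∏ _j : Fin t, a i) * ∏ j ∈ univ.erase i, (a i / a j - a' i / a' j)⁻¹
      = (∏ j, a j) * ∏ j ∈ univ.erase i, c j / (c j - c i) := fun i => by
    rw [← mul_prod_erase _ _ (mem_univ i), ← mul_prod_erase _ a (mem_univ i), mul_assoc, mul_assoc,
      ← prod_mul_distrib, ← prod_mul_distrib]
    refine congrArg _ (prod_congr rfl fun j hj => mul_inv_div_sub_div_eq (ha i) (ha j) (ha' j) ?_)
    exact hnd i j (ne_of_mem_erase hj).symm
  calc ∏ i, a i * b i - ∏ i, a' i * b' i = (∏ j, a j) * (∏ j, b j - ∏ j, c j * b' j) := by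
        simp only [ha'_eq, mul_sub, ← prod_mul_distrib, mul_assoc]
    _ = _ := by
        rw [prod_sub_prod_mul_eq_sum hc, mul_sum]
        refine sum_congr rfl fun i _ => ?_
        rw [hrow, mul_right_comm, hweight]
        ring

/-- Proposition `prp` of the paper: in a field `K`, for `t ≥ 1` and
`a, a', b, b' : Fin t → K` with `a i ≠ 0`, `a' i ≠ 0` and `a i * a' j - a' i * a j ≠ 0`
for `i ≠ j`, one has
`∏ a_i b_i - ∏ a'_i b'_i
  = ∑_i (∏_j (a_i b_j - a'_i b'_j)) * ∏_{j ≠ i} (a_i/a_j - a'_i/a'_j)⁻¹`. -/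
theorem prod_sub_prod_eq_sum {K : Type*} [Field K] (t : ℕ) (ht : 1 ≤ t)
    (a a' b b' : Fin t → K)
    (ha : ∀ i, a i ≠ 0) (ha' : ∀ i, a' i ≠ 0)
    (hnd : ∀ i j : Fin t, i ≠ j → a i * a' j - a' i * a j ≠ 0) :
    ∏ i, a i * b i - ∏ i, a' i * b' i
      = ∑ i, (∏ j, (a i * b j - a' i * b' j))
          * ∏ j ∈ Finset.univ.erase i, (a i / a j - a' i / a' j)⁻¹ :=
  prod_sub_prod_eq_sum_general t a a' b b' ha ha' hnd
end

section
/- Let K be a field, t ≥ 1 an integer, and let a_1,…,a_{t+1}, a_1',…,a_{t+1}', b_1,…,b_{t+1}, b_1',…,b_{t+1}' ∈ K satisfy a_i ≠ 0 and a_i' ≠ 0 for all i, and a_i a_j' − a_i' a_j ≠ 0 for all i ≠ j. Define d(i,i) := a_i b_i − a_i' b_i' and, for i ≠ j, d(i,j) := (a_i b_j − a_i' b_j')/(a_i/a_j − a_i'/a_j'). Then Σ_{i=1}^t (a_i'/a_{t+1}') · ( −1/(a_i/a_{t+1} − a_i'/a_{t+1}') ) · Π_{j=1}^t d(i,j) =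 Π_{j=1}^t d(t+1,j) − Π_{i=1}^t a_i' b_i'. -/
open scoped BigOperators

/-- `d(i,j)` of the paper: `d(i,i) = a_i b_i - a'_i b'_i` and, for `i ≠ j`,
`d(i,j) = (a_i b_j - a'_i b'_j) / (a_i/a_j - a'_i/a'_j)`. -/
def dFun {K : Type*} [Field K] {s : ℕ} (a a' b b' : Fin s → K) (i j : Fin s) : K :=
  if i = j then a i * b i - a' i * b' i
  else (a i * b j - a' i * b' j) / (a i / a j - a' i / a' j)

/-!
Put `g_j(x) = a_j a'_j (b_j - x b'_j) / (a'_j - x a_j)`. The rational function `∏_j g_j` has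
simple poles at the points `x_i = a'_i / a_i`, tends to `∏_j a'_j b'_j` at infinity, and
`g_j(x_i) = d(i,j)` for `i ≠ j`. Its partial fraction decomposition
`∏_j g_j(x) = ∏_j a'_j b'_j + ∑_i a'_i (∏_j d(i,j)) / (a'_i - x a_i)`
follows by induction on the number of factors from the decomposition of a product of two simple
fractions with distinct poles. Evaluating it over `j ≤ t` at the pole `x = x_{t+1}` gives the
theorem.
-/

section PartialFractions

variable {K ι : Type*} [Field K] {a a' : ι → K} {i k : ι}

theorem sub_div_mul_ne_zero (hk : a k ≠ 0) (hik : a i * a' k - a' i * a k ≠ 0) :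
    a' i - a' k / a k * a i ≠ 0 := by
  rw [show a' i - a' k / a k * a i = -(a i * a' k - a' i * a k) / a k by field_simp; ring]
  exact div_ne_zero (neg_ne_zero.mpr hik) hk

theorem inv_mul_inv_eq_add_inv_mul_inv (hi : a i ≠ 0) (hk : a k ≠ 0)
    (hik : a i * a' k - a' i * a k ≠ 0) {x : K}
    (hxi : a' i - x * a i ≠ 0) (hxk : a' k - x * a k ≠ 0) :
    (a' k - x * a k)⁻¹ * (a' i - x * a i)⁻¹
      = (a' k - a' i / a i * a k)⁻¹ * (a' i - x * a i)⁻¹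
        + (a' i - a' k / a k * a i)⁻¹ * (a' k - x * a k)⁻¹ := by
  rw [show a' k - a' i / a i * a k = (a i * a' k - a' i * a k) / a i by field_simp,
    show a' i - a' k / a k * a i = -(a i * a' k - a' i * a k) / a k by field_simp; ring]
  have hki : a' k * a i - a k * a' i ≠ 0 := fun h => hik (by linear_combination h)
  field_simp
  ring

theorem mul_add_sum_div_eq {s : Finset ι} (hk : a k ≠ 0) (ha : ∀ i ∈ s, a i ≠ 0)
    (hnd : ∀ i ∈ s, a i * a' k - a' i * a k ≠ 0) {x : K}
    (hx : ∀ i ∈ s, a' i - x * a i ≠ 0) (hxk : a' k - x * a k ≠ 0)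
    (c r C : K) (R : ι → K) :
    (c + r / (a' k - x * a k)) * (C + ∑ i ∈ s, R i / (a' i - x * a i))
      = c * C + ∑ i ∈ s, R i * (c + r / (a' k - a' i / a i * a k)) / (a' i - x * a i)
        + r * (C + ∑ i ∈ s, R i / (a' i - a' k / a k * a i)) / (a' k - x * a k) := by
  have hterm : ∀ i ∈ s, (c + r / (a' k - x * a k)) * (R i / (a' i - x * a i))
      = R i * (c + r / (a' k - a' i / a i * a k)) / (a' i - x * a i)
        + r * (R i / (a' i - a' k / a k * a i)) / (a' k - x * a k) := by
    intro i hi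
    simp only [div_eq_mul_inv]
    linear_combination (r * R i) *
      inv_mul_inv_eq_add_inv_mul_inv (ha i hi) hk (hnd i hi) (hx i hi) hxk
  rw [mul_add, Finset.mul_sum, Finset.sum_congr rfl hterm, Finset.sum_add_distrib,
    ← Finset.sum_div, ← Finset.mul_sum]
  ring

theorem div_mul_neg_inv_sub_div (hk : a k ≠ 0) (hk' : a' k ≠ 0) :
    a' i / a' k * -(a i / a k - a' i / a' k)⁻¹ = a' i / (a' i - a' k / a k * a i) := by
  rw [div_sub_div _ _ hk hk', inv_div,
    show a' i - a' k / a k * a i = -(a i * a' k - a k * a' i) / a k by field_simp; ring,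
    div_div_eq_mul_div, div_neg, mul_neg, mul_div_assoc']
  congr 2
  field_simp

end PartialFractions

section Mobius

variable {K : Type*} [Field K] {n : ℕ}

def dMobius (a a' b b' : Fin n → K) (j : Fin n) (x : K) : K :=
  a j * a' j * (b j - x * b' j) / (a' j - x * a j)

variable {a a' b b' : Fin n → K}

theorem dMobius_eq_add {j : Fin n} {x : K} (hx : a' j - x * a j ≠ 0) :
    dMobius a a' b b' j x = a' j * b' j + a' j * dFun a a' b b' j j / (a' j - x * a j) := by
  rw [dMobius, dFun, if_pos rfl, add_div' _ _ _ hx]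
  ring

theorem dMobius_div_eq_dFun {i j : Fin n} (hij : i ≠ j) (hi : a i ≠ 0) (hj : a j ≠ 0)
    (hj' : a' j ≠ 0) (hnd : a i * a' j - a' i * a j ≠ 0) :
    dMobius a a' b b' j (a' i / a i) = dFun a a' b b' i j := by
  have hji : a' j - a' i / a i * a j ≠ 0 := sub_div_mul_ne_zero hi
    (fun h => hnd (by linear_combination -h))
  rw [dMobius, dFun, if_neg hij]
  field_simp

theorem prod_dMobius_eq_add_sum (ha : ∀ i, a i ≠ 0) (ha' : ∀ i, a' i ≠ 0)
    (hnd : ∀ i j, i ≠ j → a i * a' j - a' i * a j ≠ 0) (s : Finset (Fin n)) {x : K}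
    (hx : ∀ i ∈ s, a' i - x * a i ≠ 0) :
    ∏ j ∈ s, dMobius a a' b b' j x
      = ∏ j ∈ s, a' j * b' j
        + ∑ i ∈ s, a' i * (∏ j ∈ s, dFun a a' b b' i j) / (a' i - x * a i) := by
  induction s using Finset.induction_on generalizing x with
  | empty => simp
  | @insert k s hk ih =>
    have hne : ∀ i ∈ s, i ≠ k := fun i hi h => hk (h ▸ hi)
    have hxs : ∀ i ∈ s, a' i - x * a i ≠ 0 := fun i hi => hx i (Finset.mem_insert_of_mem hi)
    have hxk : a' k - x * a k ≠ 0 := hx k (Finset.mem_insert_self k s)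
    have hk_at_pole : ∀ i ∈ s,
        a' k * b' k + a' k * dFun a a' b b' k k / (a' k - a' i / a i * a k)
          = dFun a a' b b' i k := fun i hi => by
      have hki : a' k - a' i / a i * a k ≠ 0 :=
        sub_div_mul_ne_zero (ha i) (hnd k i (hne i hi).symm)
      rw [← dMobius_eq_add hki,
        dMobius_div_eq_dFun (hne i hi) (ha i) (ha k) (ha' k) (hnd i k (hne i hi))]
    have hs_at_pole : ∏ j ∈ s, a' j * b' j
          + ∑ i ∈ s, a' i * (∏ j ∈ s, dFun a a' b b' i j) / (a' i - a' k / a k * a i)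
        = ∏ j ∈ s, dFun a a' b b' k j := by
      rw [← ih fun i hi => sub_div_mul_ne_zero (ha k) (hnd i k (hne i hi))]
      exact Finset.prod_congr rfl fun j hj =>
        dMobius_div_eq_dFun (hne j hj).symm (ha k) (ha j) (ha' j) (hnd k j (hne j hj).symm)
    have hsum : ∑ i ∈ s, a' i * (∏ j ∈ s, dFun a a' b b' i j)
          * (a' k * b' k + a' k * dFun a a' b b' k k / (a' k - a' i / a i * a k)) / (a' i - x * a i)
        = ∑ i ∈ s, a' i * (∏ j ∈ insert k s, dFun a a' b b' i j) / (a' i - x * a i) :=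
      Finset.sum_congr rfl fun i hi => by rw [hk_at_pole i hi, Finset.prod_insert hk]; ring
    rw [Finset.prod_insert hk, dMobius_eq_add hxk, ih hxs,
      mul_add_sum_div_eq (ha k) (fun i _ => ha i) (fun i hi => hnd i k (hne i hi)) hxs hxk,
      hs_at_pole, hsum,
      Finset.prod_insert hk, Finset.sum_insert hk, Finset.prod_insert hk]
    ring

end Mobius

/-- The index `t+1` of the paper is `Fin.last t`, and `1, …, t` are the `Fin.castSucc i`. -/
theorem dFun_sum_identity_general {K : Type*} [Field K] (t : ℕ)
    (a a' b b' : Fin (t + 1) → K)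
    (ha : ∀ i, a i ≠ 0) (ha' : ∀ i, a' i ≠ 0)
    (hnd : ∀ i j : Fin (t + 1), i ≠ j → a i * a' j - a' i * a j ≠ 0) :
    ∑ i : Fin t,
        (a' i.castSucc / a' (Fin.last t))
          * (-(a i.castSucc / a (Fin.last t) - a' i.castSucc / a' (Fin.last t))⁻¹)
          * ∏ j : Fin t, dFun a a' b b' i.castSucc j.castSucc
      = ∏ j : Fin t, dFun a a' b b' (Fin.last t) j.castSucc
        - ∏ i : Fin t, a' i.castSucc * b' i.castSucc := by
  set L := Fin.last t
  have hL : ∀ i : Fin t, i.castSucc ≠ L := fun i => (Fin.castSucc_lt_last i).ne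
  have hx : ∀ i ∈ Finset.univ.map Fin.castSuccEmb, a' i - a' L / a L * a i ≠ 0 := by
    simp only [Finset.mem_map, Finset.mem_univ, true_and, Fin.coe_castSuccEmb]
    rintro _ ⟨i, rfl⟩
    exact sub_div_mul_ne_zero (ha L) (hnd _ _ (hL i))
  have hpf := prod_dMobius_eq_add_sum (b := b) (b' := b') ha ha' hnd _ hx
  simp only [Finset.prod_map, Finset.sum_map, Fin.coe_castSuccEmb] at hpf
  have hweight (i : Fin t) (P : K) :
      a' i.castSucc / a' L * (-(a i.castSucc / a L - a' i.castSucc / a' L)⁻¹) * P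
        = a' i.castSucc * P / (a' i.castSucc - a' L / a L * a i.castSucc) := by
    rw [div_mul_neg_inv_sub_div (ha L) (ha' L), div_mul_eq_mul_div]
  rw [Finset.sum_congr rfl fun i _ => hweight i _, eq_sub_iff_add_eq', ← hpf]
  exact Finset.prod_congr rfl fun j _ =>
    dMobius_div_eq_dFun (hL j).symm (ha L) (ha _) (ha' _) (hnd _ _ (hL j).symm)

/-- the inductive-step identity, with indices `1, …, t` realized as
`Fin.castSucc i` for `i : Fin t` and the index `t+1` realized as `Fin.last t`:
`∑_{i=1}^t (a'_i/a'_{t+1}) · (-1/(a_i/a_{t+1} - a'_i/a'_{t+1})) · ∏_{j=1}^t d(i,j)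
  = ∏_{j=1}^t d(t+1,j) - ∏_{i=1}^t a'_i b'_i`. -/
theorem dFun_sum_identity {K : Type*} [Field K] (t : ℕ) (ht : 1 ≤ t)
    (a a' b b' : Fin (t + 1) → K)
    (ha : ∀ i, a i ≠ 0) (ha' : ∀ i, a' i ≠ 0)
    (hnd : ∀ i j : Fin (t + 1), i ≠ j → a i * a' j - a' i * a j ≠ 0) :
    ∑ i : Fin t,
        (a' i.castSucc / a' (Fin.last t))
          * (-(a i.castSucc / a (Fin.last t) - a' i.castSucc / a' (Fin.last t))⁻¹)
          * ∏ j : Fin t, dFun a a' b b' i.castSucc j.castSucc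
      = ∏ j : Fin t, dFun a a' b b' (Fin.last t) j.castSucc
        - ∏ i : Fin t, a' i.castSucc * b' i.castSucc :=
  dFun_sum_identity_general t a a' b b' ha ha' hnd
end

section
/- Let r ≥ 1 be an integer, let l = (l_1,…,l_r) ∈ ℕ^r satisfy l_1 + ⋯ + l_r = r, and let a_1,…,a_r, a_1',…,a_r' be nonzero real numbers with a_q a_p' − a_p a_q' ≠ 0 for all p ≠ q. Then Π_{q=1}^r a_q^{l_q−1} − Π_{q=1}^r (a_q')^{l_q−1} = Σ_{p : l_p = 0} Π_{q ≠ p} ( a_q/a_p − a_q'/a_p' )^{l_q−1}, where the sum is over all indices p with l_p = 0 and all powers are integer powers (exponent l_q − 1 ∈ ℤ, equal to −1 when l_q = 0). -/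
open scoped BigOperators

/-!
Put `v q = a' q / a q`. Factoring `∏ q, a q ^ (l q - 1)` out of both sides, the identity becomes
the partial fraction decomposition of the rational function `∏ q, (x - v q) ^ (l q - 1)`, evaluated
at `x = 0`: because `∑ q, (l q - 1) = 0` it tends to `1` at infinity, and its poles are the simple
poles `v p` with `l p = 0`. That decomposition is Lagrange interpolation of the monic numerator
`∏ q, (X - v q) ^ (l q - 1)` at those nodes.
-/

open Polynomial Finset

namespace Lagrange

variable {F ι : Type*} [Field F] [DecidableEq ι] {s : Finset ι} {v : ι → F}

theorem eq_nodal_add_interpolate (hvs : Set.InjOn v s) {f : F[X]} (hf : f.Monic)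
    (hdeg : f.natDegree = #s) : f = nodal s v + interpolate s v (fun i => f.eval (v i)) := by
  have hlt : (f - nodal s v).degree < #s := by
    have := degree_sub_lt_left (p := f) (q := nodal s v)
      (by rw [degree_nodal, degree_eq_natDegree hf.ne_zero, hdeg]) hf.ne_zero
      (by rw [hf.leadingCoeff, nodal_monic.leadingCoeff])
    rwa [degree_eq_natDegree hf.ne_zero, hdeg] at this
  rw [← sub_eq_iff_eq_add', eq_interpolate hvs hlt]
  exact interpolate_eq_of_values_eq_on _ _ fun i hi => by simp [eval_nodal_at_node hi]

theorem eval_div_eval_nodal_eq_one_add_sum (hvs : Set.InjOn v s) {f : F[X]} (hf : f.Monic)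
    (hdeg : f.natDegree = #s) {x : F} (hx : ∀ i ∈ s, x ≠ v i) :
    f.eval x / (nodal s v).eval x
      = 1 + ∑ i ∈ s, nodalWeight s v i * (x - v i)⁻¹ * f.eval (v i) := by
  have hf_x := congrArg (eval x) (eq_nodal_add_interpolate hvs hf hdeg)
  have h_interp := eval_interpolate_not_at_node (r := fun i => f.eval (v i)) hx
  rw [eval_add, h_interp] at hf_x
  rw [hf_x, add_div, mul_div_cancel_left₀ _ (eval_nodal_not_at_node hx),
    div_self (eval_nodal_not_at_node hx)]

end Lagrange

section zpow

variable {G₀ ι : Type*} [CommGroupWithZero G₀]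

theorem Finset.prod_zpow_eq_zpow_sum₀ (s : Finset ι) (e : ι → ℤ) {c : G₀} (hc : c ≠ 0) :
    ∏ i ∈ s, c ^ e i = c ^ ∑ i ∈ s, e i := by
  induction s using Finset.cons_induction with
  | empty => simp
  | cons i s hi ih => rw [prod_cons, sum_cons, ih, zpow_add₀ hc]

theorem Finset.prod_const_mul_zpow (s : Finset ι) (e : ι → ℤ) (y : ι → G₀) {c : G₀} (hc : c ≠ 0) :
    ∏ i ∈ s, (c * y i) ^ e i = c ^ (∑ i ∈ s, e i) * ∏ i ∈ s, y i ^ e i := by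
  simp_rw [mul_zpow, prod_mul_distrib, prod_zpow_eq_zpow_sum₀ s e hc]

theorem zpow_natCast_sub_one_eq_pow_div_ite (y : G₀) (m : ℕ) :
    y ^ ((m : ℤ) - 1) = y ^ (m - 1) / if m = 0 then y else 1 := by
  rcases Nat.eq_zero_or_pos m with rfl | hm
  · simp
  · rw [if_neg hm.ne', div_one, ← zpow_natCast, Nat.cast_sub hm, Nat.cast_one]

theorem Finset.prod_zpow_natCast_sub_one (s : Finset ι) (y : ι → G₀) (l : ι → ℕ) :
    ∏ i ∈ s, y i ^ ((l i : ℤ) - 1) = (∏ i ∈ s, y i ^ (l i - 1)) / ∏ i ∈ s with l i = 0, y i := by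
  simp_rw [zpow_natCast_sub_one_eq_pow_div_ite, prod_div_distrib, prod_filter]

end zpow

section PartialFractions

variable {K ι : Type*} [Field K] [Fintype ι] [DecidableEq ι] {l : ι → ℕ}

omit [DecidableEq ι] in
theorem sum_tsub_one_eq_card_filter_eq_zero (hl : ∑ q, l q = Fintype.card ι) :
    ∑ q, (l q - 1) = #{q | l q = 0} := by
  have h : ∀ q, l q - 1 + 1 = l q + if l q = 0 then 1 else 0 := fun q => by split_ifs <;> omega
  have hsum := sum_congr (s₁ := univ) rfl fun q _ => h q
  simp only [sum_add_distrib, sum_const, card_univ, smul_eq_mul, mul_one, sum_boole, hl] at hsum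
  exact Nat.add_right_cancel (hsum.trans (add_comm _ _))

theorem prod_sub_zpow_eq_one_add_sum (hl : ∑ q, l q = Fintype.card ι) (v : ι → K)
    (hv : Set.InjOn v {p | l p = 0}) (x : K) (hx : ∀ p, l p = 0 → x ≠ v p) :
    ∏ q, (x - v q) ^ ((l q : ℤ) - 1)
      = 1 + ∑ p with l p = 0, (∏ q ∈ univ.erase p, (v p - v q) ^ ((l q : ℤ) - 1)) / (x - v p) := by
  set S : Finset ι := {p | l p = 0}
  set f : K[X] := ∏ q, (X - C (v q)) ^ (l q - 1)
  have hf_eval : ∀ y, f.eval y = ∏ q, (y - v q) ^ (l q - 1) := fun y => by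
    simp [f, eval_prod]
  have hf : f.Monic := monic_prod_of_monic _ _ fun q _ => (monic_X_sub_C _).pow _
  have hdeg : f.natDegree = #S := by
    rw [natDegree_prod_of_monic _ _ fun q _ => (monic_X_sub_C _).pow _]
    simpa using sum_tsub_one_eq_card_filter_eq_zero hl
  have hvS : Set.InjOn v S := fun p hp q hq => hv (by simpa [S] using hp) (by simpa [S] using hq)
  have hxS : ∀ p ∈ S, x ≠ v p := fun p hp => hx p (by simpa [S] using hp)
  rw [prod_zpow_natCast_sub_one, ← hf_eval, ← Lagrange.eval_nodal,
    Lagrange.eval_div_eval_nodal_eq_one_add_sum hvS hf hdeg hxS]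
  congr 1
  refine sum_congr rfl fun p hp => ?_
  have hlp : l p = 0 := by simpa [S] using hp
  rw [prod_zpow_natCast_sub_one, filter_erase, prod_erase _ (by simp [hlp]), ← hf_eval,
    Lagrange.nodalWeight, prod_inv_distrib]
  field_simp
  ring

omit [DecidableEq ι] in
theorem sum_natCast_sub_one_eq_zero (hl : ∑ q, l q = Fintype.card ι) :
    ∑ q, ((l q : ℤ) - 1) = 0 := by
  rw [sum_sub_distrib, ← Nat.cast_sum, hl]
  simp

theorem one_sub_prod_zpow_eq_sum (hl : ∑ q, l q = Fintype.card ι) (v : ι → K)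
    (hv : Set.InjOn v {p | l p = 0}) (hv₀ : ∀ p, l p = 0 → v p ≠ 0) :
    1 - ∏ q, v q ^ ((l q : ℤ) - 1)
      = ∑ p with l p = 0, (∏ q ∈ univ.erase p, (v p - v q) ^ ((l q : ℤ) - 1)) / v p := by
  have h_sign := prod_const_mul_zpow univ (fun q => (l q : ℤ) - 1) v (neg_ne_zero.2 one_ne_zero)
  simp only [neg_one_mul, sum_natCast_sub_one_eq_zero hl, zpow_zero, one_mul] at h_sign
  have hpf := prod_sub_zpow_eq_one_add_sum hl v hv 0 fun p hp => (hv₀ p hp).symm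
  simp only [zero_sub, h_sign, div_neg, sum_neg_distrib] at hpf
  rw [hpf, sub_add_cancel_left, neg_neg]

theorem prod_erase_div_sub_div_zpow (hl : ∑ q, l q = Fintype.card ι) {a a' : ι → K}
    (ha : ∀ q, a q ≠ 0) (ha' : ∀ q, a' q ≠ 0) {p : ι} (hp : l p = 0) :
    ∏ q ∈ univ.erase p, (a q / a p - a' q / a' p) ^ ((l q : ℤ) - 1)
      = (∏ q, a q ^ ((l q : ℤ) - 1)) *
          ((∏ q ∈ univ.erase p, (a' p / a p - a' q / a q) ^ ((l q : ℤ) - 1)) / (a' p / a p)) := by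
  have hsplit : ∀ q, a q / a p - a' q / a' p = (a' p)⁻¹ * (a q * (a' p / a p - a' q / a q)) := by
    intro q
    field_simp [ha p, ha q, ha' p]
  simp_rw [hsplit]
  rw [prod_const_mul_zpow _ _ _ (inv_ne_zero (ha' p)), sum_erase_eq_sub (mem_univ p),
    sum_natCast_sub_one_eq_zero hl, hp]
  simp_rw [mul_zpow, prod_mul_distrib]
  rw [← mul_prod_erase univ (fun q => a q ^ ((l q : ℤ) - 1)) (mem_univ p), hp]
  simp only [Nat.cast_zero, zero_sub, sub_neg_eq_add, zero_add, zpow_one, zpow_neg_one]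
  field_simp [ha p, ha' p]

end PartialFractions

theorem prod_zpow_sub_prod_zpow_general (r : ℕ) (l : Fin r → ℕ)
    (hl : ∑ q, l q = r) (a a' : Fin r → ℝ)
    (ha : ∀ q, a q ≠ 0) (ha' : ∀ q, a' q ≠ 0)
    (hnd : ∀ p q : Fin r, p ≠ q → a q * a' p - a p * a' q ≠ 0) :
    ∏ q, a q ^ ((l q : ℤ) - 1) - ∏ q, a' q ^ ((l q : ℤ) - 1)
      = ∑ p ∈ Finset.univ.filter (fun p => l p = 0),
          ∏ q ∈ Finset.univ.erase p, (a q / a p - a' q / a' p) ^ ((l q : ℤ) - 1) := by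
  replace hl : ∑ q, l q = Fintype.card (Fin r) := by simpa using hl
  have hv : Set.InjOn (fun q => a' q / a q) {p | l p = 0} := fun p _ q _ hpq => by
    by_contra hne
    refine hnd p q hne ?_
    rw [div_eq_div_iff (ha p) (ha q)] at hpq
    linarith
  have h_a' : ∏ q, a' q ^ ((l q : ℤ) - 1)
      = (∏ q, a q ^ ((l q : ℤ) - 1)) * ∏ q, (a' q / a q) ^ ((l q : ℤ) - 1) := by
    simp_rw [← prod_mul_distrib, ← mul_zpow, mul_div_cancel₀ _ (ha _)]
  rw [h_a', ← mul_one_sub, one_sub_prod_zpow_eq_sum hl _ hv fun p _ => div_ne_zero (ha' p) (ha p),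
    mul_sum]
  exact sum_congr rfl fun p hp => (prod_erase_div_sub_div_zpow hl ha ha' (by simpa using hp)).symm

/-- equation (eq3) of the paper: for `r ≥ 1`, `l ∈ ℕ^r` with `∑ l_q = r`,
and nonzero reals `a_q, a'_q` with `a_q a'_p - a_p a'_q ≠ 0` for `p ≠ q`,
`∏_q a_q^(l_q - 1) - ∏_q a'_q^(l_q - 1)
  = ∑_{p, l_p = 0} ∏_{q ≠ p} (a_q/a_p - a'_q/a'_p)^(l_q - 1)`,
all powers being integer (`zpow`) powers. -/
theorem prod_zpow_sub_prod_zpow (r : ℕ) (hr : 1 ≤ r) (l : Fin r → ℕ)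
    (hl : ∑ q, l q = r) (a a' : Fin r → ℝ)
    (ha : ∀ q, a q ≠ 0) (ha' : ∀ q, a' q ≠ 0)
    (hnd : ∀ p q : Fin r, p ≠ q → a q * a' p - a p * a' q ≠ 0) :
    ∏ q, a q ^ ((l q : ℤ) - 1) - ∏ q, a' q ^ ((l q : ℤ) - 1)
      = ∑ p ∈ Finset.univ.filter (fun p => l p = 0),
          ∏ q ∈ Finset.univ.erase p, (a q / a p - a' q / a' p) ^ ((l q : ℤ) - 1) :=
  prod_zpow_sub_prod_zpow_general r l hl a a' ha ha' hnd
end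

section
/- For every integer m ≥ 1, every integer r ≥ 2, every vector a = (a_1,…,a_r) of nonzero real numbers and all x_2,…,x_r ∈ ℝ, one has ζ_fml(1−m, a, (0, x_2,…,x_r)) = ζ_fml(1−m, a, (1, x_2,…,x_r)) + ζ_fml(1−m, (a_2,…,a_r), (x_2,…,x_r)). -/
/-!
Split off the first coordinate of the multi-index `l`. The summands of `ζ_fml` at `x₁ = 0` and
`x₁ = 1` differ only in the factor `B_{l₁}(x₁) a₁^(l₁-1) / l₁!`, and `B_n(1) - B_n(0) = n 0^(n-1)`
vanishes unless `n = 1`, where the factor `a₁⁰ / 1!` is `1`. So the difference is the sum over the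
remaining `r + 1` indices with total weight `m + r`, i.e. `ζ_fml(1-m, (a₂,…), (x₂,…))`; the extra
sign is absorbed by `(-1)^r`.
-/

open scoped BigOperators

/-- The formal multiple zeta value `zetaFml m a x = ζ_fml(1 - m, a, x)` of the paper:
`(-1)^r (m-1)! ∑_{l, Σ l i = m + r - 1} ∏_i B_{l i}(x i) * (a i)^(l i - 1) / (l i)!`,
where `B_l` is the `l`-th Bernoulli polynomial (normalized with `B₁(X) = X - 1/2`)
and `(a i)^(l i - 1)` is an integer (`zpow`) power. -/
noncomputable def zetaFml (m : ℕ) {r : ℕ} (a x : Fin r → ℝ) : ℝ :=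
  (-1 : ℝ) ^ r * (Nat.factorial (m - 1)) *
    ∑ l ∈ Finset.Nat.antidiagonalTuple r (m + r - 1),
      ∏ i, Polynomial.aeval (x i) (Polynomial.bernoulli (l i)) * a i ^ ((l i : ℤ) - 1)
        / (Nat.factorial (l i))

open Finset Polynomial

theorem Finset.Nat.sum_antidiagonalTuple_succ {M : Type*} [AddCommMonoid M] (k n : ℕ)
    (f : (Fin (k + 1) → ℕ) → M) :
    ∑ l ∈ antidiagonalTuple (k + 1) n, f l
      = ∑ p ∈ antidiagonal n, ∑ t ∈ antidiagonalTuple k p.2, f (Fin.cons p.1 t) := by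
  rw [sum_sigma']
  refine (sum_nbij' (fun q => Fin.cons q.1.1 q.2)
    (fun l => (⟨(l 0, ∑ i, Fin.tail l i), Fin.tail l⟩ : (_ : ℕ × ℕ) × (Fin k → ℕ)))
    ?_ ?_ ?_ ?_ ?_).symm
  · rintro ⟨⟨j, n'⟩, t⟩ h
    simp only [mem_sigma, HasAntidiagonal.mem_antidiagonal,
      Nat.mem_antidiagonalTuple] at h ⊢
    rw [Fin.sum_cons, h.2, h.1]
  · intro l hl
    simp only [mem_sigma, HasAntidiagonal.mem_antidiagonal,
      Nat.mem_antidiagonalTuple] at hl ⊢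
    exact ⟨by rw [← hl, Fin.sum_univ_succ]; rfl, trivial⟩
  · rintro ⟨⟨j, n'⟩, t⟩ h
    simp only [mem_sigma, HasAntidiagonal.mem_antidiagonal,
      Nat.mem_antidiagonalTuple] at h
    simp [h.2]
  · intro l _
    simp
  · intro _ _
    rfl

theorem Polynomial.aeval_one_bernoulli {A : Type*} [CommRing A] [Algebra ℚ A] (n : ℕ) :
    aeval (1 : A) (bernoulli n) = aeval (0 : A) (bernoulli n) + n * 0 ^ (n - 1) := by
  simpa [aeval_comp] using congrArg (aeval (0 : A)) (bernoulli_comp_one_add_X n)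

noncomputable def bernoulliTerm (l : ℕ) (a x : ℝ) : ℝ :=
  aeval x (bernoulli l) * a ^ ((l : ℤ) - 1) / l.factorial

theorem zetaFml_eq (m : ℕ) {r : ℕ} (a x : Fin r → ℝ) :
    zetaFml m a x = (-1) ^ r * (m - 1).factorial *
      ∑ l ∈ Nat.antidiagonalTuple r (m + r - 1), ∏ i, bernoulliTerm (l i) (a i) (x i) :=
  rfl

theorem bernoulliTerm_zero_sub_one (l : ℕ) (a : ℝ) :
    bernoulliTerm l a 0 - bernoulliTerm l a 1 = if l = 1 then -1 else 0 := by
  rw [bernoulliTerm, bernoulliTerm, ← sub_div, ← sub_mul, aeval_one_bernoulli]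
  split_ifs with h
  · simp [h]
  · obtain rfl | hl := Nat.eq_zero_or_pos l
    · simp
    · simp [zero_pow (by omega : l - 1 ≠ 0)]

theorem sum_prod_bernoulliTerm_cons_zero_sub_one (k n : ℕ) (a : Fin (k + 1) → ℝ)
    (x : Fin k → ℝ) :
    ∑ l ∈ Nat.antidiagonalTuple (k + 1) (n + 1),
        ∏ i, bernoulliTerm (l i) (a i) ((Fin.cons 0 x : Fin (k + 1) → ℝ) i)
      - ∑ l ∈ Nat.antidiagonalTuple (k + 1) (n + 1),
        ∏ i, bernoulliTerm (l i) (a i) ((Fin.cons 1 x : Fin (k + 1) → ℝ) i)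
      = -∑ t ∈ Nat.antidiagonalTuple k n, ∏ i, bernoulliTerm (t i) (a i.succ) (x i) := by
  rw [← sum_sub_distrib, Nat.sum_antidiagonalTuple_succ]
  simp only [Fin.prod_univ_succ, Fin.cons_zero, Fin.cons_succ, ← sub_mul,
    bernoulliTerm_zero_sub_one, ite_mul, neg_one_mul, zero_mul]
  rw [sum_eq_single_of_mem (1, n) (by simp [add_comm])]
  · simp
  · rintro ⟨j, n'⟩ hp hne
    have hj : j ≠ 1 := by
      rintro rfl
      simp_all [add_comm]
    simp [hj]

theorem zetaFml_zero_first_general (m : ℕ) (r : ℕ) (a : Fin (r + 2) → ℝ) (x : Fin (r + 1) → ℝ) :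
    zetaFml m a (Fin.cons 0 x)
      = zetaFml m a (Fin.cons 1 x) + zetaFml m (fun i => a i.succ) x := by
  have h := sum_prod_bernoulliTerm_cons_zero_sub_one (r + 1) (m + r) a x
  rw [zetaFml_eq, zetaFml_eq, zetaFml_eq, show m + (r + 2) - 1 = m + r + 1 by omega,
    show m + (r + 1) - 1 = m + r by omega]
  linear_combination (-1 : ℝ) ^ (r + 2) * (m - 1).factorial * h

theorem zetaFml_zero_first (m : ℕ) (hm : 1 ≤ m) (r : ℕ) (a : Fin (r + 2) → ℝ)
    (ha : ∀ i, a i ≠ 0) (x : Fin (r + 1) → ℝ) :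
    zetaFml m a (Fin.cons 0 x)
      = zetaFml m a (Fin.cons 1 x) + zetaFml m (fun i => a i.succ) x :=
  zetaFml_zero_first_general m r a x
end

section
/- For every integer m ≥ 1, every integer r ≥ 1, every positive integer N, every vector a = (a_1,…,a_r) of nonzero real numbers and every x = (x_1,…,x_r) ∈ ℝ^r, one has the multiplication formula ζ_fml(1−m, a, x) = Σ_{h=0}^{N−1} ζ_fml(1−m, (N a_1, a_2,…,a_r), ((x_1+h)/N, x_2,…,x_r)). -/
/-!
Each summand of `zetaFml` is a product over the coordinates, and only the first factor
depends on `(a 0, x 0)`. Summing that factor over `h` reduces the formula to Raabe's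
multiplication theorem `∑_{h<N} Bₙ((x + h)/N) = N^(1-n) Bₙ(x)`, which is read off from the
generating function `X e^{tX} / (e^X - 1)`: rescaling `X ↦ NX` and summing `e^{(x+h)X}` over `h`
is a geometric series that turns `e^{NX} - 1` back into `e^X - 1`.
-/

open scoped BigOperators

open PowerSeries Polynomial Finset

theorem PowerSeries.exp_pow_sub_one_ne_zero {K : Type*} [Field K] [CharZero K] {N : ℕ}
    (hN : N ≠ 0) : exp K ^ N - 1 ≠ 0 := by
  intro h
  have := congrArg (PowerSeries.coeff 1) h
  simp [exp_pow_eq_rescale_exp, coeff_rescale, hN] at this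

namespace Polynomial

variable {K : Type*} [Field K] [CharZero K]

noncomputable def bernoulliGenFun (t : K) : K⟦X⟧ :=
  PowerSeries.mk fun n => aeval t ((1 / n.factorial : ℚ) • bernoulli n)

theorem bernoulliGenFun_mul_exp_sub_one (t : K) :
    bernoulliGenFun t * (exp K - 1) = PowerSeries.X * rescale t (exp K) :=
  bernoulli_generating_function t

theorem coeff_bernoulliGenFun (t : K) (n : ℕ) :
    PowerSeries.coeff n (bernoulliGenFun t) = aeval t (bernoulli n) / n.factorial := by
  simp [bernoulliGenFun, Rat.smul_def, div_eq_inv_mul]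

theorem sum_rescale_bernoulliGenFun {N : ℕ} (hN : N ≠ 0) (x : K) :
    ∑ h ∈ range N, rescale (N : K) (bernoulliGenFun ((x + h) / N))
      = PowerSeries.C (N : K) * bernoulliGenFun x := by
  have hN' : (N : K) ≠ 0 := Nat.cast_ne_zero.2 hN
  have hrescale (t : K) : rescale (N : K) (bernoulliGenFun t) * (exp K ^ N - 1)
      = rescale (N : K) (bernoulliGenFun t * (exp K - 1)) := by
    rw [exp_pow_eq_rescale_exp, map_mul, map_sub, map_one]
  apply mul_right_cancel₀ (exp_pow_sub_one_ne_zero (K := K) hN)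
  calc (∑ h ∈ range N, rescale (N : K) (bernoulliGenFun ((x + h) / N))) * (exp K ^ N - 1)
      = ∑ h ∈ range N,
          PowerSeries.C (N : K) * (PowerSeries.X * rescale x (exp K)) * exp K ^ h := by
        rw [sum_mul]
        refine sum_congr rfl fun h _ => ?_
        rw [hrescale, bernoulliGenFun_mul_exp_sub_one, map_mul, rescale_X, rescale_rescale,
          div_mul_cancel₀ _ hN', ← exp_mul_exp_eq_exp_add, exp_pow_eq_rescale_exp]
        ring
    _ = PowerSeries.C (N : K) * (bernoulliGenFun x * (exp K - 1))
          * ∑ h ∈ range N, exp K ^ h := by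
        rw [bernoulliGenFun_mul_exp_sub_one, mul_sum]
    _ = PowerSeries.C (N : K) * bernoulliGenFun x * (exp K ^ N - 1) := by
        rw [← geom_sum_mul]; ring

theorem pow_mul_sum_aeval_bernoulli (N n : ℕ) (x : K) :
    (N : K) ^ n * ∑ h ∈ range N, aeval ((x + h) / N) (bernoulli n)
      = N * aeval x (bernoulli n) := by
  rcases eq_or_ne N 0 with rfl | hN
  · simp
  have hcoeff := congrArg (PowerSeries.coeff n) (sum_rescale_bernoulliGenFun hN x)
  simp only [map_sum, coeff_rescale, PowerSeries.coeff_C_mul, coeff_bernoulliGenFun,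
    ← mul_div_assoc, ← sum_div, ← mul_sum] at hcoeff
  exact (div_left_inj' (Nat.cast_ne_zero.2 n.factorial_ne_zero)).1 hcoeff

theorem sum_aeval_bernoulli_mul_zpow_div {N : ℕ} (hN : N ≠ 0) (n : ℕ) (t b : K) :
    ∑ h ∈ range N, aeval ((t + h) / N) (bernoulli n) * ((N : K) * b) ^ ((n : ℤ) - 1)
        / n.factorial
      = aeval t (bernoulli n) * b ^ ((n : ℤ) - 1) / n.factorial := by
  have hN' : (N : K) ≠ 0 := Nat.cast_ne_zero.2 hN
  rw [← sum_div, ← sum_mul, mul_zpow]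
  congr 1
  calc (∑ h ∈ range N, aeval ((t + h) / N) (bernoulli n))
        * ((N : K) ^ ((n : ℤ) - 1) * b ^ ((n : ℤ) - 1))
      = (N : K)⁻¹ * ((N : K) ^ n * ∑ h ∈ range N, aeval ((t + h) / N) (bernoulli n))
          * b ^ ((n : ℤ) - 1) := by
        rw [zpow_sub₀ hN', zpow_one, zpow_natCast]; ring
    _ = aeval t (bernoulli n) * b ^ ((n : ℤ) - 1) := by
        rw [pow_mul_sum_aeval_bernoulli, inv_mul_cancel_left₀ hN']

end Polynomial

theorem zetaFml_mul_formula_general (m : ℕ) (r : ℕ) (N : ℕ) (hN : 0 < N)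
    (a x : Fin (r + 1) → ℝ) :
    zetaFml m a x
      = ∑ h ∈ Finset.range N,
          zetaFml m (Function.update a 0 ((N : ℝ) * a 0))
            (Function.update x 0 ((x 0 + (h : ℝ)) / (N : ℝ))) := by
  simp only [zetaFml, ← mul_sum]
  rw [sum_comm]
  congr 1
  refine sum_congr rfl fun l _ => ?_
  simp only [Fin.prod_univ_succ, Function.update_self, Function.update_of_ne (Fin.succ_ne_zero _),
    ← sum_mul]
  rw [sum_aeval_bernoulli_mul_zpow_div hN.ne']

theorem zetaFml_mul_formula (m : ℕ) (hm : 1 ≤ m) (r : ℕ) (N : ℕ) (hN : 0 < N)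
    (a x : Fin (r + 1) → ℝ) (ha : ∀ i, a i ≠ 0) :
    zetaFml m a x
      = ∑ h ∈ Finset.range N,
          zetaFml m (Function.update a 0 ((N : ℝ) * a 0))
            (Function.update x 0 ((x 0 + (h : ℝ)) / (N : ℝ))) :=
  zetaFml_mul_formula_general m r N hN a x
end

section
/- For every integer m ≥ 1, every integer r ≥ 2, every vector a = (a_1,…,a_r) of nonzero real numbers with a_1 + a_2 ≠ 0, and every x = (x_1,…,x_r) ∈ ℝ^r, one has ζ_fml(1−m, a, x) = ζ_fml(1−m, (a_1, a_1+a_2, a_3,…,a_r), (x_1−x_2+1, x_2, x_3,…,x_r)) + ζ_fml(1−m, (a_1+a_2, a_2, a_3,…,a_r), (x_1, x_2−x_1, x_3,…,x_r)). -/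
/-!
Up to the factor `(-1)^r (m-1)!`, `ζ_fml(1-m, a, x)` is the coefficient of `t^(m+r-1)` in
`∏ᵢ t e^(xᵢaᵢt) / (e^(aᵢt) - 1)`. The subdivision therefore only concerns the first two factors,
where it is the identity
`e^(xa+yb) (e^(a+b) - 1) = e^(xa+yb) e^a (e^b - 1) + e^(xa+yb) (e^a - 1)`
after clearing the denominators `(e^a - 1)(e^b - 1)(e^(a+b) - 1)`.
-/

open scoped BigOperators

open Finset in
theorem PowerSeries.coeff_prod_univ_fin {R : Type*} [CommSemiring R] {k : ℕ}
    (f : Fin k → PowerSeries R) (d : ℕ) :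
    coeff d (∏ i, f i) = ∑ l ∈ Nat.antidiagonalTuple k d, ∏ i, coeff (l i) (f i) := by
  rw [coeff_prod, finsuppAntidiag, sum_map, ← piAntidiag_univ_fin_eq_antidiagonalTuple,
    ← sum_attach (piAntidiag univ d)]
  rfl

open PowerSeries Nat

section BernoulliSeries

variable {K : Type*} [Field K] [CharZero K]

/-- The series `t e^(xat) / (e^(at) - 1)`. -/
noncomputable def bernoulliSeries (x a : K) : PowerSeries K :=
  PowerSeries.mk fun n => Polynomial.aeval x (Polynomial.bernoulli n) * a ^ ((n : ℤ) - 1) / n !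

theorem bernoulliSeries_mul_exp_sub_one (x : K) {a : K} (ha : a ≠ 0) :
    bernoulliSeries x a * (rescale a (exp K) - 1) = X * rescale (x * a) (exp K) := by
  have h : bernoulliSeries x a = C a⁻¹ * rescale a
      (PowerSeries.mk fun n => Polynomial.aeval x ((1 / n ! : ℚ) • Polynomial.bernoulli n)) := by
    ext n
    simp [bernoulliSeries, coeff_rescale, zpow_sub_one₀ ha, Rat.smul_def]
    ring
  rw [h, mul_assoc, ← map_one (rescale a), ← map_sub, ← map_mul,
    Polynomial.bernoulli_generating_function, map_mul, rescale_X, rescale_rescale, ← mul_assoc,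
    ← mul_assoc, ← map_mul, inv_mul_cancel₀ ha, map_one, one_mul]

theorem rescale_exp_sub_one_ne_zero {a : K} (ha : a ≠ 0) : rescale a (exp K) - 1 ≠ 0 := by
  intro h
  simpa [coeff_rescale, ha] using congrArg (coeff 1) h

theorem bernoulliSeries_mul_bernoulliSeries (x y : K) {a b : K} (ha : a ≠ 0) (hb : b ≠ 0)
    (hab : a + b ≠ 0) :
    bernoulliSeries x a * bernoulliSeries y b
      = bernoulliSeries (x - y + 1) a * bernoulliSeries y (a + b)
        + bernoulliSeries x (a + b) * bernoulliSeries (y - x) b := by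
  have exp_add (u v : K) : rescale (u + v) (exp K) = rescale u (exp K) * rescale v (exp K) :=
    (exp_mul_exp_eq_exp_add u v).symm
  refine mul_right_cancel₀ (mul_ne_zero (mul_ne_zero (rescale_exp_sub_one_ne_zero ha)
    (rescale_exp_sub_one_ne_zero hb)) (rescale_exp_sub_one_ne_zero hab)) ?_
  have hxa := bernoulliSeries_mul_exp_sub_one x ha
  have hyb := bernoulliSeries_mul_exp_sub_one y hb
  have hxya := bernoulliSeries_mul_exp_sub_one (x - y + 1) ha
  have hyab := bernoulliSeries_mul_exp_sub_one y hab
  have hxab := bernoulliSeries_mul_exp_sub_one x hab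
  have hyxb := bernoulliSeries_mul_exp_sub_one (y - x) hb
  have exp_first : rescale ((x - y + 1) * a) (exp K) * rescale (y * (a + b)) (exp K)
      = rescale (x * a) (exp K) * rescale (y * b) (exp K) * rescale a (exp K) := by
    rw [← exp_add, ← exp_add, ← exp_add]; ring_nf
  have exp_second : rescale (x * (a + b)) (exp K) * rescale ((y - x) * b) (exp K)
      = rescale (x * a) (exp K) * rescale (y * b) (exp K) := by
    rw [← exp_add, ← exp_add]; ring_nf
  rw [exp_add a b] at hyab hxab ⊢
  linear_combination (rescale a (exp K) * rescale b (exp K) - 1) * congr($hxa * $hyb)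
    - (rescale b (exp K) - 1) * congr($hxya * $hyab)
    - (rescale a (exp K) - 1) * congr($hxab * $hyxb)
    - X ^ 2 * (rescale b (exp K) - 1) * exp_first - X ^ 2 * (rescale a (exp K) - 1) * exp_second

end BernoulliSeries

theorem zetaFml_eq_coeff_prod (m : ℕ) {r : ℕ} (a x : Fin r → ℝ) :
    zetaFml m a x
      = (-1) ^ r * (m - 1)! * coeff (m + r - 1) (∏ i, bernoulliSeries (x i) (a i)) := by
  simp only [zetaFml, coeff_prod_univ_fin, bernoulliSeries, coeff_mk]

theorem zetaFml_cone_subdivision_general (m : ℕ) (r : ℕ) (a x : Fin (r + 2) → ℝ)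
    (ha : ∀ i, a i ≠ 0) (h12 : a 0 + a 1 ≠ 0) :
    zetaFml m a x
      = zetaFml m (Function.update a 1 (a 0 + a 1)) (Function.update x 0 (x 0 - x 1 + 1))
        + zetaFml m (Function.update a 0 (a 0 + a 1)) (Function.update x 1 (x 1 - x 0)) := by
  simp only [zetaFml_eq_coeff_prod, ← mul_add, ← map_add]
  congr 2
  simp only [Fin.prod_univ_succ, Fin.succ_zero_eq_one, Function.update_self,
    Function.update_of_ne (Fin.succ_ne_zero _), Function.update_of_ne Fin.zero_ne_one,
    Function.update_of_ne (Fin.succ_succ_ne_one _)]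
  rw [← mul_assoc, bernoulliSeries_mul_bernoulliSeries _ _ (ha 0) (ha 1) h12]
  ring

theorem zetaFml_cone_subdivision (m : ℕ) (hm : 1 ≤ m) (r : ℕ) (a x : Fin (r + 2) → ℝ)
    (ha : ∀ i, a i ≠ 0) (h12 : a 0 + a 1 ≠ 0) :
    zetaFml m a x
      = zetaFml m (Function.update a 1 (a 0 + a 1)) (Function.update x 0 (x 0 - x 1 + 1))
        + zetaFml m (Function.update a 0 (a 0 + a 1)) (Function.update x 1 (x 1 - x 0)) :=
  zetaFml_cone_subdivision_general m r a x ha h12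
end

section
/- Let r ≥ 2 be an integer, let b = (b_1,…,b_r) and b' = (b_1',…,b_r') be vectors of positive real numbers with b_q b_p' ≠ b_p b_q' for all p ≠ q, and let x = (x_1,…,x_r) ∈ ℝ^r. For l = (l_1,…,l_r) ∈ ℕ^r set C_l(b,b') := ∫_0^1 ( Π_{m=1}^r (b_m + b_m' u)^{l_m−1} − Π_{m=1}^r b_m^{l_m−1} ) u^{−1} du, where the exponents l_m − 1 ∈ ℤ are integer powers. Then (−1)^r Σ_{l ∈ ℕ^r, l_1+⋯+l_r = r} ( C_l(b,b') + C_l(b',b) ) Π_{q=1}^r B_{l_q}(x_q)/l_q! = −Σ_{p=1}^r ζ_fml(−1, (b_q/b_p − b_q'/b_p')_{q ≠ p}, (x_q)_{q ≠ p}) · log(b_p/b_p'). -/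
open scoped BigOperators

/-- The integral `C_l(b, b') = ∫_0^1 (∏_m (b_m + b'_m u)^(l_m - 1) - ∏_m b_m^(l_m - 1)) / u du`,
with integer-power exponents. -/
noncomputable def Cint {r : ℕ} (l : Fin r → ℕ) (b b' : Fin r → ℝ) : ℝ :=
  ∫ u in (0:ℝ)..1,
    ((∏ i, (b i + b' i * u) ^ ((l i : ℤ) - 1)) - ∏ i, (b i) ^ ((l i : ℤ) - 1)) / u


open Finset Polynomial

variable {r : ℕ}

lemma prod_zpow_sum {ι : Type*} (s : Finset ι) {x : ℝ} (hx : x ≠ 0) (f : ι → ℤ) :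
    ∏ i ∈ s, x ^ f i = x ^ (∑ i ∈ s, f i) := by
  induction s using Finset.cons_induction with
  | empty => simp
  | cons a s ha ih => simp [Finset.prod_cons, Finset.sum_cons, ih, zpow_add₀ hx]

lemma prod_erase_eq_succAbove (g : Fin (r + 2) → ℝ) (p : Fin (r + 2)) :
    ∏ j ∈ Finset.univ.erase p, g j = ∏ i : Fin (r + 1), g (p.succAbove i) := by
  have h2 : ∏ j : Fin (r + 2), (if j = p then 1 else g j)
      = (if p = p then 1 else g p) * ∏ j ∈ Finset.univ.erase p, (if j = p then 1 else g j) :=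
    (Finset.mul_prod_erase Finset.univ _ (Finset.mem_univ p)).symm
  have h3 := Fin.prod_univ_succAbove (fun j => if j = p then 1 else g j) p
  simp only [eq_self_iff_true, if_true, one_mul] at h2 h3
  have h4 : ∏ j ∈ Finset.univ.erase p, (if j = p then 1 else g j)
      = ∏ j ∈ Finset.univ.erase p, g j :=
    Finset.prod_congr rfl (fun j hj => if_neg (Finset.mem_erase.1 hj).1)
  have h5 : ∏ i : Fin (r + 1), (if p.succAbove i = p then 1 else g (p.succAbove i))
      = ∏ i : Fin (r + 1), g (p.succAbove i) :=
    Finset.prod_congr rfl (fun i _ => if_neg (Fin.succAbove_ne p i))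
  rw [← h4, ← h2, h3, h5]

lemma zpow_prod_split (l : Fin (r + 2) → ℕ) (s : Finset (Fin (r + 2))) (v : Fin (r + 2) → ℝ) :
    ∏ i ∈ s, v i ^ ((l i : ℤ) - 1)
      = (∏ i ∈ s.filter (fun i => l i = 0), (v i)⁻¹) *
          ∏ i ∈ s.filter (fun i => ¬ l i = 0), v i ^ (l i - 1) := by
  rw [← Finset.prod_filter_mul_prod_filter_not s (fun i => l i = 0)]
  congr 1
  · exact Finset.prod_congr rfl fun i hi => by
      rw [(Finset.mem_filter.1 hi).2]; norm_num
  · refine Finset.prod_congr rfl fun i hi => ?_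
    have h1 : 1 ≤ l i := Nat.pos_of_ne_zero (Finset.mem_filter.1 hi).2
    rw [show ((l i : ℤ) - 1) = ((l i - 1 : ℕ) : ℤ) by omega, zpow_natCast]

noncomputable def Aco (l : Fin (r + 2) → ℕ) (b b' : Fin (r + 2) → ℝ) (p : Fin (r + 2)) : ℝ :=
  ∏ j ∈ Finset.univ.erase p, (b j / b p - b' j / b' p) ^ ((l j : ℤ) - 1)

section Main
variable {b b' : Fin (r + 2) → ℝ}

lemma cint_eq (hb : ∀ i, 0 < b i) (hb' : ∀ i, 0 < b' i)
    (hnd : ∀ p q : Fin (r + 2), p ≠ q → b q * b' p ≠ b p * b' q)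
    (l : Fin (r + 2) → ℕ) (hl : ∑ i, l i = r + 2) :
    Cint l b b' = ∑ p ∈ Finset.univ.filter (fun p => l p = 0),
      (-(Aco l b b' p)) * (Real.log (b p + b' p) - Real.log (b p)) := by
  classical
  have hbne : ∀ i, b i ≠ 0 := fun i => (hb i).ne'
  have hb'ne : ∀ i, b' i ≠ 0 := fun i => (hb' i).ne'
  set S : Finset (Fin (r + 2)) := Finset.univ.filter (fun p => l p = 0) with hS
  set T : Finset (Fin (r + 2)) := Finset.univ.filter (fun p => ¬ l p = 0) with hT
  -- nonvanishing of b q - b' q * (b p / b' p) for q ≠ p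
  have hend : ∀ p q : Fin (r + 2), q ≠ p → b q - b' q * (b p / b' p) ≠ 0 := by
    intro p q hqp h
    apply hnd p q (Ne.symm hqp)
    field_simp [hb'ne p] at h
    linear_combination h
  -- cardinality / sum facts
  have hST : S.card + T.card = r + 2 := by
    have := Finset.card_filter_add_card_filter_not (s := Finset.univ)
      (p := fun p : Fin (r + 2) => l p = 0)
    simpa [hS, hT] using this
  have hsumT : ∑ i ∈ T, l i = r + 2 := by
    have h1 := Finset.sum_filter_add_sum_filter_not Finset.univ (fun p => l p = 0) l
    have h2 : ∑ i ∈ S, l i = 0 := Finset.sum_eq_zero fun i hi => (Finset.mem_filter.1 hi).2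
    rw [hl] at h1
    rw [← hS, ← hT] at h1
    omega
  have hcard : ∑ i ∈ T, (l i - 1) = S.card := by
    have h1 : ∑ i ∈ T, ((l i - 1) + 1) = ∑ i ∈ T, l i :=
      Finset.sum_congr rfl fun i hi =>
        Nat.succ_pred_eq_of_pos (Nat.pos_of_ne_zero (Finset.mem_filter.1 hi).2)
    rw [Finset.sum_add_distrib, Finset.sum_const, smul_eq_mul, mul_one] at h1
    omega
  -- filter identities
  have hfilter1 : ∀ p ∈ S, (Finset.univ.erase p).filter (fun i => l i = 0) = S.erase p := by
    intro p hp
    ext q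
    simp only [hS, Finset.mem_filter, Finset.mem_erase, Finset.mem_univ, true_and, and_true]
    try tauto
  have hfilter2 : ∀ p ∈ S, (Finset.univ.erase p).filter (fun i => ¬ l i = 0) = T := by
    intro p hp
    have hp0 : l p = 0 := by
      have := Finset.mem_filter.1 (hS ▸ hp)
      exact this.2
    ext q
    simp only [hT, Finset.mem_filter, Finset.mem_erase, Finset.mem_univ, true_and, and_true]
    constructor
    · rintro ⟨-, h⟩; exact h
    · intro h; exact ⟨fun hq => h (hq ▸ hp0), h⟩
  have hmemS : ∀ p ∈ S, l p = 0 := by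
    intro p hp
    have := Finset.mem_filter.1 (hS ▸ hp)
    exact this.2
  -- the Aco formula
  have hAco : ∀ p ∈ S, Aco l b b' p * b p
      = (∏ q ∈ S.erase p, (b q - b' q * (b p / b' p))⁻¹) *
          ∏ i ∈ T, (b i - b' i * (b p / b' p)) ^ (l i - 1) := by
    intro p hp
    have hp0 : l p = 0 := hmemS p hp
    have hsum1 : ∑ j ∈ Finset.univ.erase p, ((l j : ℤ) - 1) = 1 := by
      have h1 : l p + ∑ j ∈ Finset.univ.erase p, l j = ∑ j : Fin (r + 2), l j :=
        Finset.add_sum_erase _ l (Finset.mem_univ p)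
      have h2 : ∑ j ∈ Finset.univ.erase p, l j = r + 2 := by omega
      rw [Finset.sum_sub_distrib]
      have h3 : ∑ j ∈ Finset.univ.erase p, (l j : ℤ) = (r : ℤ) + 2 := by
        rw [← Nat.cast_sum, h2]; push_cast; ring
      rw [h3, Finset.sum_const, Finset.card_erase_of_mem (Finset.mem_univ p)]
      simp only [Finset.card_univ, Fintype.card_fin, smul_eq_mul, mul_one, nsmul_eq_mul]
      omega
    have step1 : Aco l b b' p
        = (∏ j ∈ Finset.univ.erase p, (b j - b' j * (b p / b' p)) ^ ((l j : ℤ) - 1)) / b p := by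
      rw [Aco]
      have hcong : ∀ j ∈ Finset.univ.erase p,
          (b j / b p - b' j / b' p) ^ ((l j : ℤ) - 1)
            = ((b j - b' j * (b p / b' p)) / b p) ^ ((l j : ℤ) - 1) := by
        intro j _
        congr 1
        field_simp [hbne p, hb'ne p]
      rw [Finset.prod_congr rfl hcong]
      simp_rw [div_zpow]
      rw [Finset.prod_div_distrib, prod_zpow_sum _ (hbne p), hsum1, zpow_one]
    rw [step1, div_mul_cancel₀ _ (hbne p),
      zpow_prod_split l (Finset.univ.erase p) _, hfilter1 p hp, hfilter2 p hp]
  -- the polynomial identity via evaluation at nodes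
  set cnd : Fin (r + 2) → ℝ := fun p => -(b p / b' p) with hcnd
  set P : Polynomial ℝ :=
    ∏ i ∈ T, (Polynomial.C (b i) + Polynomial.C (b' i) * Polynomial.X) ^ (l i - 1) with hPdef
  set f0 : ℝ := ∏ i, (b i) ^ ((l i : ℤ) - 1) with hf0
  set Q : Polynomial ℝ :=
    Polynomial.C f0 * ∏ p ∈ S, (Polynomial.C (b p) + Polynomial.C (b' p) * Polynomial.X)
      + ∑ p ∈ S, Polynomial.C (-(Aco l b b' p) * b' p) *
          (Polynomial.X * ∏ q ∈ S.erase p,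
            (Polynomial.C (b q) + Polynomial.C (b' q) * Polynomial.X)) with hQdef
  have hevalP : ∀ y : ℝ, P.eval y = ∏ i ∈ T, (b i + b' i * y) ^ (l i - 1) := by
    intro y; simp [hPdef, Polynomial.eval_prod]
  have hevalQ : ∀ y : ℝ, Q.eval y
      = f0 * ∏ p ∈ S, (b p + b' p * y)
        + ∑ p ∈ S, (-(Aco l b b' p) * b' p) * (y * ∏ q ∈ S.erase p, (b q + b' q * y)) := by
    intro y; simp [hQdef, Polynomial.eval_prod, Polynomial.eval_finset_sum]
  have hinj : Set.InjOn cnd ↑S := by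
    intro p hp q hq hpq2
    by_contra hne
    apply hnd p q hne
    simp only [hcnd, neg_inj] at hpq2
    field_simp [hb'ne p, hb'ne q] at hpq2
    linear_combination -hpq2
  have h0img : (0 : ℝ) ∉ S.image cnd := by
    simp only [Finset.mem_image]
    rintro ⟨p, hp, hcp⟩
    have h1 : 0 < b p / b' p := div_pos (hb p) (hb' p)
    rw [hcnd] at hcp
    simp only [neg_eq_zero] at hcp
    exact absurd hcp (ne_of_gt h1)
  set t : Finset ℝ := insert 0 (S.image cnd) with htdef
  have htcard : t.card = S.card + 1 := by
    rw [htdef, Finset.card_insert_of_notMem h0img, Finset.card_image_of_injOn hinj]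
  have hlinDeg : ∀ i : Fin (r + 2),
      (Polynomial.C (b i) + Polynomial.C (b' i) * Polynomial.X).natDegree ≤ 1 := by
    intro i
    refine le_trans (Polynomial.natDegree_add_le _ _) (max_le ?_ ?_)
    · simp [Polynomial.natDegree_C]
    · exact le_trans Polynomial.natDegree_mul_le (by simp)
  have hdegP : P.natDegree ≤ S.card := by
    rw [hPdef, ← hcard]
    refine le_trans (Polynomial.natDegree_prod_le _ _) ?_
    refine Finset.sum_le_sum fun i _ => ?_
    refine le_trans Polynomial.natDegree_pow_le ?_
    calc (l i - 1) * (Polynomial.C (b i) + Polynomial.C (b' i) * Polynomial.X).natDegree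
        ≤ (l i - 1) * 1 := Nat.mul_le_mul_left _ (hlinDeg i)
      _ = l i - 1 := mul_one _
  have hdegQ : Q.natDegree ≤ S.card := by
    rw [hQdef]
    refine le_trans (Polynomial.natDegree_add_le _ _) (max_le ?_ ?_)
    · refine le_trans Polynomial.natDegree_mul_le ?_
      rw [Polynomial.natDegree_C, zero_add]
      refine le_trans (Polynomial.natDegree_prod_le _ _) ?_
      refine le_trans (Finset.sum_le_sum fun i _ => hlinDeg i) ?_
      simp
    · refine Polynomial.natDegree_sum_le_of_forall_le _ _ fun p hp => ?_
      refine le_trans Polynomial.natDegree_mul_le ?_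
      rw [Polynomial.natDegree_C, zero_add]
      refine le_trans Polynomial.natDegree_mul_le ?_
      have h2 : (∏ q ∈ S.erase p,
          (Polynomial.C (b q) + Polynomial.C (b' q) * Polynomial.X)).natDegree ≤ S.card - 1 := by
        refine le_trans (Polynomial.natDegree_prod_le _ _) ?_
        refine le_trans (Finset.sum_le_sum fun i _ => hlinDeg i) ?_
        simp [Finset.card_erase_of_mem hp]
      have hcardpos : 1 ≤ S.card := Finset.card_pos.2 ⟨p, hp⟩
      have h3 : (Polynomial.X : Polynomial ℝ).natDegree ≤ 1 := Polynomial.natDegree_X_le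
      omega
  have hPQ : P = Q := by
    refine Polynomial.eq_of_degrees_lt_of_eval_finset_eq t ?_ ?_ ?_
    · refine lt_of_le_of_lt Polynomial.degree_le_natDegree ?_
      rw [htcard]
      exact_mod_cast Nat.lt_succ_of_le hdegP
    · refine lt_of_le_of_lt Polynomial.degree_le_natDegree ?_
      rw [htcard]
      exact_mod_cast Nat.lt_succ_of_le hdegQ
    · intro y hy
      rw [htdef] at hy
      rcases Finset.mem_insert.1 hy with h0 | himg
      · subst h0
        rw [hevalP 0, hevalQ 0]
        simp only [mul_zero, zero_mul, add_zero, Finset.sum_const_zero]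
        have hsplit := zpow_prod_split l Finset.univ b
        rw [← hS, ← hT, ← hf0] at hsplit
        rw [hsplit, mul_comm (∏ i ∈ S, (b i)⁻¹) (∏ i ∈ T, b i ^ (l i - 1)), mul_assoc]
        have hSprod : (∏ i ∈ S, (b i)⁻¹) * ∏ i ∈ S, b i = 1 := by
          rw [← Finset.prod_mul_distrib]
          exact Finset.prod_eq_one fun i _ => inv_mul_cancel₀ (hbne i)
        rw [hSprod, mul_one]
      · rcases Finset.mem_image.1 himg with ⟨p, hp, rfl⟩
        rw [hevalP, hevalQ]
        have hcndp : cnd p = -(b p / b' p) := by rw [hcnd]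
        have hbp : b' p * (b p / b' p) = b p := by
          rw [mul_comm, div_mul_cancel₀ _ (hb'ne p)]
        have hzero : b p + b' p * cnd p = 0 := by
          rw [hcndp, mul_neg, hbp]; ring
        have hprodS : ∏ q ∈ S, (b q + b' q * cnd p) = 0 := Finset.prod_eq_zero hp hzero
        rw [hprodS, mul_zero, zero_add]
        rw [Finset.sum_eq_single_of_mem p hp (fun q hq hqp => by
          have hpe : p ∈ S.erase q := Finset.mem_erase.2 ⟨Ne.symm hqp, hp⟩
          rw [Finset.prod_eq_zero hpe hzero]
          ring)]
        have hE : ∀ j, b j + b' j * cnd p = b j - b' j * (b p / b' p) := by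
          intro j; rw [hcndp]; ring
        simp only [hE]
        rw [hcndp]
        have hAp := hAco p hp
        have hprodinv : (∏ q ∈ S.erase p, (b q - b' q * (b p / b' p))⁻¹) *
            ∏ q ∈ S.erase p, (b q - b' q * (b p / b' p)) = 1 := by
          rw [← Finset.prod_mul_distrib]
          exact Finset.prod_eq_one fun q hq =>
            inv_mul_cancel₀ (hend p q (Finset.mem_erase.1 hq).1)
        have hmain : ∏ i ∈ T, (b i - b' i * (b p / b' p)) ^ (l i - 1)
            = (Aco l b b' p * b p) * ∏ q ∈ S.erase p, (b q - b' q * (b p / b' p)) := by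
          rw [hAp, mul_comm (∏ q ∈ S.erase p, (b q - b' q * (b p / b' p))⁻¹)
            (∏ i ∈ T, (b i - b' i * (b p / b' p)) ^ (l i - 1)), mul_assoc, hprodinv, mul_one]
        rw [hmain]
        linear_combination
          (-(Aco l b b' p * ∏ q ∈ S.erase p, (b q - b' q * (b p / b' p)))) * hbp
  -- pointwise partial fraction identity
  have hpt : ∀ u : ℝ, 0 < u →
      ((∏ i, (b i + b' i * u) ^ ((l i : ℤ) - 1)) - ∏ i, (b i) ^ ((l i : ℤ) - 1)) / u
        = ∑ p ∈ S, (-(Aco l b b' p)) * (b' p / (b p + b' p * u)) := by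
    intro u hu
    have hW : ∀ q : Fin (r + 2), 0 < b q + b' q * u := fun q =>
      add_pos (hb q) (mul_pos (hb' q) hu)
    have hWne : ∀ q : Fin (r + 2), b q + b' q * u ≠ 0 := fun q => (hW q).ne'
    have hprodW : ∀ s : Finset (Fin (r + 2)), (∏ q ∈ s, (b q + b' q * u)) ≠ 0 :=
      fun s => Finset.prod_ne_zero_iff.2 fun q _ => hWne q
    have hfu : ∏ i, (b i + b' i * u) ^ ((l i : ℤ) - 1)
        = (∏ i ∈ T, (b i + b' i * u) ^ (l i - 1)) / ∏ p ∈ S, (b p + b' p * u) := by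
      rw [zpow_prod_split l Finset.univ (fun i => b i + b' i * u), ← hS, ← hT,
        Finset.prod_inv_distrib, mul_comm, ← div_eq_mul_inv]
    have hQu := congrArg (Polynomial.eval u) hPQ
    rw [hevalP u, hevalQ u] at hQu
    have hterm : ∀ p ∈ S, (-(Aco l b b' p)) * (b' p / (b p + b' p * u))
        = ((-(Aco l b b' p) * b' p) * (u * ∏ q ∈ S.erase p, (b q + b' q * u)))
            / (u * ∏ q ∈ S, (b q + b' q * u)) := by
      intro p hp
      rw [← Finset.mul_prod_erase S _ hp]
      have hEne : (∏ q ∈ S.erase p, (b q + b' q * u)) ≠ 0 :=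
        Finset.prod_ne_zero_iff.2 fun q _ => hWne q
      have hD : u * ((b p + b' p * u) * ∏ q ∈ S.erase p, (b q + b' q * u)) ≠ 0 :=
        mul_ne_zero hu.ne' (mul_ne_zero (hWne p) hEne)
      rw [← mul_div_assoc, div_eq_div_iff (hWne p) hD]
      ring
    rw [hfu, ← hf0, Finset.sum_congr rfl hterm, ← Finset.sum_div, hQu, add_div,
      mul_div_cancel_right₀ _ (hprodW S), add_sub_cancel_left, div_div,
      mul_comm (∏ q ∈ S, (b q + b' q * u)) u]
  -- the integral computation
  unfold Cint
  have hIoc : Set.uIoc (0:ℝ) 1 = Set.Ioc 0 1 := Set.uIoc_of_le zero_le_one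
  have hcong : (∫ u in (0:ℝ)..1,
        ((∏ i, (b i + b' i * u) ^ ((l i : ℤ) - 1)) - ∏ i, (b i) ^ ((l i : ℤ) - 1)) / u)
      = ∫ u in (0:ℝ)..1, ∑ p ∈ S, (-(Aco l b b' p)) * (b' p / (b p + b' p * u)) := by
    refine intervalIntegral.integral_congr_ae (Filter.Eventually.of_forall fun u hu => ?_)
    rw [hIoc] at hu
    exact hpt u hu.1
  rw [hcong]
  have hcont : ∀ p ∈ S, IntervalIntegrable
      (fun u => (-(Aco l b b' p)) * (b' p / (b p + b' p * u))) MeasureTheory.volume 0 1 := by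
    intro p hp
    apply ContinuousOn.intervalIntegrable
    apply ContinuousOn.mul continuousOn_const
    apply ContinuousOn.div continuousOn_const
    · exact (continuous_const.add (continuous_const.mul continuous_id)).continuousOn
    · intro u hu
      have hu0 : 0 ≤ u := by
        rw [Set.uIcc_of_le zero_le_one] at hu; exact hu.1
      exact (add_pos_of_pos_of_nonneg (hb p) (mul_nonneg (hb' p).le hu0)).ne'
  rw [intervalIntegral.integral_finset_sum hcont]
  refine Finset.sum_congr rfl fun p hp => ?_
  rw [intervalIntegral.integral_const_mul]
  congr 1
  have hderiv : ∀ u ∈ Set.uIcc (0:ℝ) 1,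
      HasDerivAt (fun v => Real.log (b p + b' p * v)) (b' p / (b p + b' p * u)) u := by
    intro u hu
    have hu0 : 0 ≤ u := by rw [Set.uIcc_of_le zero_le_one] at hu; exact hu.1
    have h1 : HasDerivAt (fun v : ℝ => b p + b' p * v) (b' p) u := by
      simpa using ((hasDerivAt_id u).const_mul (b' p)).const_add (b p)
    exact h1.log (add_pos_of_pos_of_nonneg (hb p) (mul_nonneg (hb' p).le hu0)).ne'
  have hint : IntervalIntegrable (fun u => b' p / (b p + b' p * u)) MeasureTheory.volume 0 1 := by
    apply ContinuousOn.intervalIntegrable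
    apply ContinuousOn.div continuousOn_const
    · exact (continuous_const.add (continuous_const.mul continuous_id)).continuousOn
    · intro u hu
      have hu0 : 0 ≤ u := by rw [Set.uIcc_of_le zero_le_one] at hu; exact hu.1
      exact (add_pos_of_pos_of_nonneg (hb p) (mul_nonneg (hb' p).le hu0)).ne'
  rw [intervalIntegral.integral_eq_sub_of_hasDerivAt hderiv hint]
  norm_num

lemma sum_erase_one (l : Fin (r + 2) → ℕ) (hl : ∑ i, l i = r + 2) (p : Fin (r + 2))
    (hp0 : l p = 0) : ∑ j ∈ Finset.univ.erase p, ((l j : ℤ) - 1) = 1 := by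
  have h1 : l p + ∑ j ∈ Finset.univ.erase p, l j = ∑ j : Fin (r + 2), l j :=
    Finset.add_sum_erase _ l (Finset.mem_univ p)
  have h2 : ∑ j ∈ Finset.univ.erase p, l j = r + 2 := by omega
  rw [Finset.sum_sub_distrib]
  have h3 : ∑ j ∈ Finset.univ.erase p, (l j : ℤ) = (r : ℤ) + 2 := by
    rw [← Nat.cast_sum, h2]; push_cast; ring
  rw [h3, Finset.sum_const, Finset.card_erase_of_mem (Finset.mem_univ p)]
  simp only [Finset.card_univ, Fintype.card_fin, smul_eq_mul, mul_one, nsmul_eq_mul]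
  omega

lemma Aco_swap (l : Fin (r + 2) → ℕ) (hl : ∑ i, l i = r + 2) (p : Fin (r + 2))
    (hp0 : l p = 0) : Aco l b' b p = -Aco l b b' p := by
  unfold Aco
  have h1 : ∀ j ∈ Finset.univ.erase p,
      (b' j / b' p - b j / b p) ^ ((l j : ℤ) - 1)
        = (-1 : ℝ) ^ ((l j : ℤ) - 1) * (b j / b p - b' j / b' p) ^ ((l j : ℤ) - 1) := by
    intro j _
    rw [← mul_zpow]
    congr 1
    ring
  rw [Finset.prod_congr rfl h1, Finset.prod_mul_distrib,
    prod_zpow_sum _ (by norm_num : (-1 : ℝ) ≠ 0), sum_erase_one l hl p hp0]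
  simp

lemma cint_add (hb : ∀ i, 0 < b i) (hb' : ∀ i, 0 < b' i)
    (hnd : ∀ p q : Fin (r + 2), p ≠ q → b q * b' p ≠ b p * b' q)
    (l : Fin (r + 2) → ℕ) (hl : ∑ i, l i = r + 2) :
    Cint l b b' + Cint l b' b = ∑ p ∈ Finset.univ.filter (fun p => l p = 0),
      Aco l b b' p * Real.log (b p / b' p) := by
  have hnd' : ∀ p q : Fin (r + 2), p ≠ q → b' q * b p ≠ b' p * b q :=
    fun p q h hc => hnd p q h (by linear_combination -hc)
  rw [cint_eq hb hb' hnd l hl, cint_eq hb' hb hnd' l hl, ← Finset.sum_add_distrib]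
  refine Finset.sum_congr rfl fun p hp => ?_
  have hp0 : l p = 0 := (Finset.mem_filter.1 hp).2
  rw [Aco_swap l hl p hp0, Real.log_div (hb p).ne' (hb' p).ne', add_comm (b' p) (b p)]
  ring

end Main

lemma zetaFml_two {r : ℕ} (a x' : Fin (r + 1) → ℝ) :
    zetaFml 2 a x' = (-1 : ℝ) ^ (r + 1) *
      ∑ m ∈ Finset.Nat.antidiagonalTuple (r + 1) (r + 2),
        ∏ i, Polynomial.aeval (x' i) (Polynomial.bernoulli (m i)) * a i ^ ((m i : ℤ) - 1)
          / (Nat.factorial (m i)) := by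
  have hidx : 2 + (r + 1) - 1 = r + 2 := by omega
  rw [zetaFml, hidx]
  norm_num

theorem cint_sum_eq_zetaFml (r : ℕ) (b b' x : Fin (r + 2) → ℝ)
    (hb : ∀ i, 0 < b i) (hb' : ∀ i, 0 < b' i)
    (hnd : ∀ p q : Fin (r + 2), p ≠ q → b q * b' p ≠ b p * b' q) :
    (-1 : ℝ) ^ (r + 2) *
        ∑ l ∈ Finset.Nat.antidiagonalTuple (r + 2) (r + 2),
          (Cint l b b' + Cint l b' b) *
            ∏ q, Polynomial.aeval (x q) (Polynomial.bernoulli (l q)) / (Nat.factorial (l q))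
      = - ∑ p : Fin (r + 2),
          zetaFml 2 (fun q : Fin (r + 1) => b (p.succAbove q) / b p - b' (p.succAbove q) / b' p)
            (fun q : Fin (r + 1) => x (p.succAbove q))
          * Real.log (b p / b' p) := by
  classical
  have h1 : ∀ l ∈ Finset.Nat.antidiagonalTuple (r + 2) (r + 2),
      (Cint l b b' + Cint l b' b) *
          ∏ q, Polynomial.aeval (x q) (Polynomial.bernoulli (l q)) / (Nat.factorial (l q))
        = ∑ p ∈ Finset.univ.filter (fun p => l p = 0),
            Aco l b b' p * Real.log (b p / b' p) *
              ∏ q, Polynomial.aeval (x q) (Polynomial.bernoulli (l q)) / (Nat.factorial (l q)) := by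
    intro l hl
    rw [cint_add hb hb' hnd l (Finset.Nat.mem_antidiagonalTuple.1 hl), Finset.sum_mul]
  rw [Finset.sum_congr rfl h1]
  simp only [Finset.sum_filter]
  rw [Finset.sum_comm, Finset.mul_sum, ← Finset.sum_neg_distrib]
  refine Finset.sum_congr rfl fun p _ => ?_
  rw [← Finset.sum_filter]
  have hbij : ∑ l ∈ (Finset.Nat.antidiagonalTuple (r + 2) (r + 2)).filter (fun l => l p = 0),
      Aco l b b' p * Real.log (b p / b' p) *
        ∏ q, Polynomial.aeval (x q) (Polynomial.bernoulli (l q)) / (Nat.factorial (l q))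
    = ∑ m ∈ Finset.Nat.antidiagonalTuple (r + 1) (r + 2),
        (∏ i, Polynomial.aeval (x (p.succAbove i)) (Polynomial.bernoulli (m i)) *
          (b (p.succAbove i) / b p - b' (p.succAbove i) / b' p) ^ ((m i : ℤ) - 1)
            / (Nat.factorial (m i))) * Real.log (b p / b' p) := by
    refine Finset.sum_nbij' (fun l => l ∘ p.succAbove) (fun m => p.insertNth 0 m) ?_ ?_ ?_ ?_ ?_
    · intro l hl
      obtain ⟨hl1, hl2⟩ := Finset.mem_filter.1 hl
      rw [Finset.Nat.mem_antidiagonalTuple] at hl1 ⊢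
      have hsp : ∑ i : Fin (r + 2), l i = l p + ∑ i : Fin (r + 1), l (p.succAbove i) :=
        Fin.sum_univ_succAbove l p
      simp only [Function.comp_apply]
      omega
    · intro m hm
      rw [Finset.Nat.mem_antidiagonalTuple] at hm
      rw [Finset.mem_filter, Finset.Nat.mem_antidiagonalTuple]
      constructor
      · rw [Fin.sum_univ_succAbove _ p]
        simp only [Fin.insertNth_apply_same, Fin.insertNth_apply_succAbove, zero_add]
        exact hm
      · simp [Fin.insertNth_apply_same]
    · intro l hl
      have hl2 : l p = 0 := (Finset.mem_filter.1 hl).2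
      funext j
      rcases eq_or_ne j p with rfl | hj
      · simp [Fin.insertNth_apply_same, hl2]
      · obtain ⟨i, rfl⟩ := Fin.exists_succAbove_eq hj
        simp [Fin.insertNth_apply_succAbove]
    · intro m hm
      funext i
      simp [Function.comp_apply, Fin.insertNth_apply_succAbove]
    · intro l hl
      have hl2 : l p = 0 := (Finset.mem_filter.1 hl).2
      have hA : Aco l b b' p = ∏ i : Fin (r + 1),
          (b (p.succAbove i) / b p - b' (p.succAbove i) / b' p) ^ (((l ∘ p.succAbove) i : ℤ) - 1) := by
        rw [Aco, prod_erase_eq_succAbove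
          (fun j => (b j / b p - b' j / b' p) ^ ((l j : ℤ) - 1)) p]
        rfl
      have hG : ∏ q, Polynomial.aeval (x q) (Polynomial.bernoulli (l q)) / (Nat.factorial (l q))
          = ∏ i : Fin (r + 1),
              Polynomial.aeval (x (p.succAbove i)) (Polynomial.bernoulli ((l ∘ p.succAbove) i))
                / (Nat.factorial ((l ∘ p.succAbove) i)) := by
        rw [Fin.prod_univ_succAbove
          (fun q => Polynomial.aeval (x q) (Polynomial.bernoulli (l q)) / (Nat.factorial (l q))) p]
        simp [hl2, Polynomial.bernoulli_zero]
      rw [hA, hG]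
      have hsplit : ∏ i : Fin (r + 1),
          Polynomial.aeval (x (p.succAbove i)) (Polynomial.bernoulli ((l ∘ p.succAbove) i)) *
            (b (p.succAbove i) / b p - b' (p.succAbove i) / b' p) ^ (((l ∘ p.succAbove) i : ℤ) - 1)
              / (Nat.factorial ((l ∘ p.succAbove) i))
          = (∏ i : Fin (r + 1),
              (b (p.succAbove i) / b p - b' (p.succAbove i) / b' p) ^ (((l ∘ p.succAbove) i : ℤ) - 1)) *
            ∏ i : Fin (r + 1),
              Polynomial.aeval (x (p.succAbove i)) (Polynomial.bernoulli ((l ∘ p.succAbove) i))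
                / (Nat.factorial ((l ∘ p.succAbove) i)) := by
        rw [← Finset.prod_mul_distrib]
        exact Finset.prod_congr rfl fun i _ => by ring
      rw [hsplit]
      ring
  rw [hbij, zetaFml_two, ← Finset.sum_mul]
  rw [pow_succ]
  ring
end

section
/- Let F be a totally real number field of degree n with ring of integers 𝒪. Then there exists a family of group homomorphisms L_ι from the multiplicative group of nonzero fractional ideals of F to the additive group ℝ, indexed by the real embeddings ι : F → ℝ, such that: (a) for every nonzero fractional ideal 𝔞 of F, Σ_ι L_ι(𝔞) = log N(𝔞), where N(𝔞) is the absolute norm of 𝔞 and the sum is over all real embeddings of F; and (b) for every α ∈ F^×, there exist a totally positive unit ε of 𝒪 and a positive integer m such that L_ι((α)) = log|ι(α)| + (1/m)·log ι(ε) for every real embedding ι, where (α) denotes the principal fractional ideal generated by α. -/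
/-!
Write `ℓ(x) = (log |ι x|)_ι ∈ ℝ^ι` and let `W` be the `ℚ`-span of the vectors `ℓ(u)`,
`u` a unit. If `h` is the class number then `𝔞^h = (g)`, and `𝔞 ↦ h⁻¹ ℓ(g) mod W` is a
well-defined homomorphism into the `ℚ`-vector space `ℝ^ι / W`; composing it with any
`ℚ`-linear section of `ℝ^ι → ℝ^ι / W` gives `L`. The coordinate sum vanishes on `W` because
units have norm `±1`, while `∑ ℓ(g) = log |N g| = h log N 𝔞`. For `𝔞 = (α)` the lift differs
from `ℓ(α)` by an element of `W`, that is by `m⁻¹ ℓ(u)` for a unit `u`, and `ε = u²` is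
totally positive.
-/

open scoped nonZeroDivisors
open NumberField

theorem AddSubgroup.exists_pos_nsmul_mem_of_mem_span_rat {V : Type*} [AddCommGroup V]
    [Module ℚ V] (A : AddSubgroup V) {v : V} (hv : v ∈ Submodule.span ℚ (A : Set V)) :
    ∃ m : ℕ, 0 < m ∧ m • v ∈ A := by
  induction hv using Submodule.span_induction with
  | mem v hv => exact ⟨1, one_pos, by rwa [one_smul]⟩
  | zero => exact ⟨1, one_pos, by rw [smul_zero]; exact A.zero_mem⟩
  | add v w _ _ hv hw =>
    obtain ⟨m, hm, hmv⟩ := hv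
    obtain ⟨k, hk, hkw⟩ := hw
    refine ⟨m * k, Nat.mul_pos hm hk, ?_⟩
    rw [smul_add, mul_comm m k, mul_smul, mul_comm k m, mul_smul]
    exact A.add_mem (A.nsmul_mem hmv k) (A.nsmul_mem hkw m)
  | smul q v _ hv =>
    obtain ⟨m, hm, hmv⟩ := hv
    refine ⟨m * q.den, Nat.mul_pos hm q.pos, ?_⟩
    have : ((m * q.den : ℕ) : ℚ) * q = (q.num : ℚ) * m := by
      push_cast; rw [mul_assoc, Rat.den_mul_eq_num]; ring
    rw [← Nat.cast_smul_eq_nsmul ℚ, smul_smul, this, mul_smul, Int.cast_smul_eq_zsmul,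
      Nat.cast_smul_eq_nsmul]
    exact A.zsmul_mem hmv _

theorem FractionalIdeal.exists_spanSingleton_eq_pow_card_classGroup {R K : Type*} [CommRing R]
    [IsDedekindDomain R] [Field K] [Algebra R K] [IsFractionRing R K] [Fintype (ClassGroup R)]
    (I : (FractionalIdeal R⁰ K)ˣ) :
    ∃ x : K, x ≠ 0 ∧ spanSingleton R⁰ x = ↑(I ^ Fintype.card (ClassGroup R)) := by
  have hprincipal : ClassGroup.mk K (I ^ Fintype.card (ClassGroup R)) = 1 := by
    rw [map_pow, pow_card_eq_one]
  obtain ⟨x, hx⟩ := (isPrincipal_iff _).mp (ClassGroup.mk_eq_one_iff.mp hprincipal)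
  refine ⟨x, ?_, hx.symm⟩
  rintro rfl
  exact Units.ne_zero _ (hx.trans spanSingleton_zero)

section LogAbsVec

variable {F ι : Type*} [Field F] (emb : ι → F →+* ℝ)

noncomputable def logAbsVec (x : F) : ι → ℝ := fun i => Real.log |emb i x|

theorem logAbsVec_apply (x : F) (i : ι) : logAbsVec emb x i = Real.log |emb i x| := rfl

theorem logAbsVec_mul {x y : F} (hx : x ≠ 0) (hy : y ≠ 0) :
    logAbsVec emb (x * y) = logAbsVec emb x + logAbsVec emb y := by
  funext i
  simp only [logAbsVec_apply, Pi.add_apply, map_mul, abs_mul]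
  exact Real.log_mul (by simpa using hx) (by simpa using hy)

theorem logAbsVec_pow (x : F) (k : ℕ) : logAbsVec emb (x ^ k) = k • logAbsVec emb x := by
  funext i
  simp [logAbsVec_apply, Real.log_pow]

theorem logAbsVec_inv (x : F) : logAbsVec emb x⁻¹ = -logAbsVec emb x := by
  funext i
  simp [logAbsVec_apply]

def unitLogLattice : AddSubgroup (ι → ℝ) where
  carrier := Set.range fun u : (𝓞 F)ˣ => logAbsVec emb (u : F)
  add_mem' := by
    rintro _ _ ⟨u, rfl⟩ ⟨v, rfl⟩
    exact ⟨u * v, logAbsVec_mul emb (NumberField.Units.coe_ne_zero u)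
      (NumberField.Units.coe_ne_zero v)⟩
  zero_mem' := ⟨1, by funext i; simp [logAbsVec_apply]⟩
  neg_mem' := by
    rintro _ ⟨u, rfl⟩
    exact ⟨u⁻¹, by simp only [map_units_inv, logAbsVec_inv]⟩

noncomputable def unitLogSpan : Submodule ℚ (ι → ℝ) :=
  Submodule.span ℚ (unitLogLattice emb : Set (ι → ℝ))

theorem exists_unit_of_mem_unitLogSpan {v : ι → ℝ} (hv : v ∈ unitLogSpan emb) :
    ∃ (u : (𝓞 F)ˣ) (m : ℕ), 0 < m ∧ m • v = logAbsVec emb (u : F) := by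
  obtain ⟨m, hm, u, hu⟩ := (unitLogLattice emb).exists_pos_nsmul_mem_of_mem_span_rat hv
  exact ⟨u, m, hm, hu.symm⟩

theorem exists_unit_of_mkQ_eq_mkQ_logAbsVec {v : ι → ℝ} {α : F}
    (hv : (unitLogSpan emb).mkQ v = (unitLogSpan emb).mkQ (logAbsVec emb α)) :
    ∃ (ε : (𝓞 F)ˣ) (m : ℕ), 0 < m ∧ (∀ i, 0 < emb i ε) ∧
      ∀ i, v i = Real.log |emb i α| + 1 / m * Real.log (emb i ε) := by
  obtain ⟨u, m, hm, hmu⟩ :=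
    exists_unit_of_mem_unitLogSpan emb ((Submodule.Quotient.eq _).mp hv)
  refine ⟨u ^ 2, 2 * m, by positivity, fun i => ?_, fun i => ?_⟩
  · have hu : emb i u ≠ 0 := by simp [NumberField.Units.coe_ne_zero u]
    rw [NumberField.Units.coe_pow, map_pow]
    positivity
  · have hi := congrFun hmu i
    simp only [Pi.smul_apply, Pi.sub_apply, nsmul_eq_mul, logAbsVec_apply] at hi
    rw [NumberField.Units.coe_pow, map_pow, Real.log_pow, ← Real.log_abs (emb i u), ← hi]
    field_simp
    push_cast
    ring

variable [NumberField F]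

theorem mkQ_logAbsVec_eq_of_spanSingleton_eq {x y : F} (hx : x ≠ 0)
    (hxy : FractionalIdeal.spanSingleton (𝓞 F)⁰ x = FractionalIdeal.spanSingleton (𝓞 F)⁰ y) :
    (unitLogSpan emb).mkQ (logAbsVec emb x) = (unitLogSpan emb).mkQ (logAbsVec emb y) := by
  obtain ⟨u, rfl⟩ := FractionalIdeal.spanSingleton_eq_spanSingleton.mp hxy
  have hunit : (unitLogSpan emb).mkQ (logAbsVec emb (u : F)) = 0 :=
    (Submodule.Quotient.mk_eq_zero _).mpr (Submodule.subset_span ⟨u, rfl⟩)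
  rw [Units.smul_def, Algebra.smul_def,
    logAbsVec_mul emb (NumberField.Units.coe_ne_zero u) hx, map_add, hunit, zero_add]

noncomputable def idealLog (I : (FractionalIdeal (𝓞 F)⁰ F)ˣ) : (ι → ℝ) ⧸ unitLogSpan emb :=
  ((Fintype.card (ClassGroup (𝓞 F)) : ℚ))⁻¹ • (unitLogSpan emb).mkQ
    (logAbsVec emb (FractionalIdeal.exists_spanSingleton_eq_pow_card_classGroup I).choose)

theorem idealLog_eq_of_spanSingleton_eq {I : (FractionalIdeal (𝓞 F)⁰ F)ˣ} {x : F}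
    (hx : FractionalIdeal.spanSingleton (𝓞 F)⁰ x = ↑(I ^ Fintype.card (ClassGroup (𝓞 F)))) :
    idealLog emb I =
      ((Fintype.card (ClassGroup (𝓞 F)) : ℚ))⁻¹ • (unitLogSpan emb).mkQ (logAbsVec emb x) := by
  obtain ⟨hg0, hg⟩ :=
    (FractionalIdeal.exists_spanSingleton_eq_pow_card_classGroup I).choose_spec
  rw [idealLog, mkQ_logAbsVec_eq_of_spanSingleton_eq emb hg0 (hg.trans hx.symm)]

theorem idealLog_mul (I J : (FractionalIdeal (𝓞 F)⁰ F)ˣ) :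
    idealLog emb (I * J) = idealLog emb I + idealLog emb J := by
  obtain ⟨x, hx0, hx⟩ := FractionalIdeal.exists_spanSingleton_eq_pow_card_classGroup I
  obtain ⟨y, hy0, hy⟩ := FractionalIdeal.exists_spanSingleton_eq_pow_card_classGroup J
  have hxy : FractionalIdeal.spanSingleton (𝓞 F)⁰ (x * y) =
      ↑((I * J) ^ Fintype.card (ClassGroup (𝓞 F))) := by
    rw [← FractionalIdeal.spanSingleton_mul_spanSingleton, hx, hy, mul_pow, Units.val_mul]
  rw [idealLog_eq_of_spanSingleton_eq emb hx, idealLog_eq_of_spanSingleton_eq emb hy,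
    idealLog_eq_of_spanSingleton_eq emb hxy, logAbsVec_mul emb hx0 hy0, map_add, smul_add]

theorem idealLog_of_eq_spanSingleton {U : (FractionalIdeal (𝓞 F)⁰ F)ˣ} {α : F}
    (hU : (U : FractionalIdeal (𝓞 F)⁰ F) = FractionalIdeal.spanSingleton (𝓞 F)⁰ α) :
    idealLog emb U = (unitLogSpan emb).mkQ (logAbsVec emb α) := by
  have hα : FractionalIdeal.spanSingleton (𝓞 F)⁰ (α ^ Fintype.card (ClassGroup (𝓞 F))) =
      ↑(U ^ Fintype.card (ClassGroup (𝓞 F))) := by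
    rw [← FractionalIdeal.spanSingleton_pow, ← hU, Units.val_pow_eq_pow_val]
  have hcard : (Fintype.card (ClassGroup (𝓞 F)) : ℚ) ≠ 0 :=
    Nat.cast_ne_zero.mpr Fintype.card_ne_zero
  rw [idealLog_eq_of_spanSingleton_eq emb hα, logAbsVec_pow, map_nsmul,
    ← Nat.cast_smul_eq_nsmul ℚ, smul_smul, inv_mul_cancel₀ hcard, one_smul]

section TotallyReal

variable [Fintype ι] {emb}

theorem algebraMap_norm_eq_prod_of_bijective (hemb : Function.Bijective emb)
    (hcard : Fintype.card ι = Module.finrank ℚ F) (x : F) :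
    ((Algebra.norm ℚ x : ℚ) : ℝ) = ∏ i, emb i x := by
  let toComplex : ι → F →+* ℂ := fun i => Complex.ofRealHom.comp (emb i)
  have hinj : Function.Injective toComplex := fun i j hij =>
    hemb.injective (RingHom.ext fun y => Complex.ofReal_injective (RingHom.congr_fun hij y))
  have hbij : Function.Bijective toComplex :=
    (Fintype.bijective_iff_injective_and_card _).mpr ⟨hinj, by rw [hcard, Embeddings.card]⟩
  apply Complex.ofReal_injective
  rw [Complex.ofReal_prod, Complex.ofReal_ratCast, ← eq_ratCast (algebraMap ℚ ℂ),
    Algebra.norm_eq_prod_embeddings ℚ ℂ x,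
    ← Fintype.prod_equiv (RingHom.equivRatAlgHom F ℂ) (fun φ => φ x) _ fun φ => rfl]
  exact (Fintype.prod_bijective toComplex hbij _ _ fun i => rfl).symm

theorem sum_logAbsVec_eq_log_abs_norm (hemb : Function.Bijective emb)
    (hcard : Fintype.card ι = Module.finrank ℚ F) {x : F} (hx : x ≠ 0) :
    ∑ i, logAbsVec emb x i = Real.log |((Algebra.norm ℚ x : ℚ) : ℝ)| := by
  rw [algebraMap_norm_eq_prod_of_bijective hemb hcard, Finset.abs_prod,
    Real.log_prod fun i _ => by simpa using hx]
  rfl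

theorem sum_eq_zero_of_mem_unitLogSpan (hemb : Function.Bijective emb)
    (hcard : Fintype.card ι = Module.finrank ℚ F) {v : ι → ℝ} (hv : v ∈ unitLogSpan emb) :
    ∑ i, v i = 0 := by
  obtain ⟨u, m, hm, hmu⟩ := exists_unit_of_mem_unitLogSpan emb hv
  have hsum : (m : ℝ) * ∑ i, v i = 0 :=
    calc (m : ℝ) * ∑ i, v i = ∑ i, logAbsVec emb (u : F) i := by
          simp [← hmu, Finset.mul_sum]
      _ = 0 := by
          rw [sum_logAbsVec_eq_log_abs_norm hemb hcard (NumberField.Units.coe_ne_zero u),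
            ← Rat.cast_abs, NumberField.Units.norm, Rat.cast_one, Real.log_one]
  exact (mul_eq_zero.mp hsum).resolve_left (by positivity)

theorem sum_eq_log_absNorm_of_mkQ_eq_idealLog (hemb : Function.Bijective emb)
    (hcard : Fintype.card ι = Module.finrank ℚ F) {v : ι → ℝ}
    {I : (FractionalIdeal (𝓞 F)⁰ F)ˣ} (hv : (unitLogSpan emb).mkQ v = idealLog emb I) :
    ∑ i, v i = Real.log (FractionalIdeal.absNorm (I : FractionalIdeal (𝓞 F)⁰ F) : ℝ) := by
  obtain ⟨x, hx0, hx⟩ := FractionalIdeal.exists_spanSingleton_eq_pow_card_classGroup I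
  rw [idealLog_eq_of_spanSingleton_eq emb hx, ← map_smul] at hv
  set h := Fintype.card (ClassGroup (𝓞 F))
  have hdiff := sum_eq_zero_of_mem_unitLogSpan hemb hcard ((Submodule.Quotient.eq _).mp hv)
  have hgen : ∑ i, logAbsVec emb x i =
      h * Real.log (FractionalIdeal.absNorm (I : FractionalIdeal (𝓞 F)⁰ F) : ℝ) := by
    rw [sum_logAbsVec_eq_log_abs_norm hemb hcard hx0, ← Rat.cast_abs,
      ← FractionalIdeal.absNorm_span_singleton (𝓞 F), hx, Units.val_pow_eq_pow_val, map_pow,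
      Rat.cast_pow, Real.log_pow]
  have hh : (h : ℝ) ≠ 0 := Nat.cast_ne_zero.mpr Fintype.card_ne_zero
  simp only [Pi.sub_apply, Pi.smul_apply, Finset.sum_sub_distrib, Rat.smul_def] at hdiff
  rwa [← Finset.mul_sum, hgen, Rat.cast_inv, Rat.cast_natCast, inv_mul_cancel_left₀ hh,
    sub_eq_zero] at hdiff

end TotallyReal

end LogAbsVec

/-- for a totally real number field `F` of degree `n` (given by a bijective
enumeration `emb : Fin n → (F →+* ℝ)` of its real embeddings, with `n` the degree), there is
a family of additive maps `L i` on the group of invertible (i.e. nonzero) fractional ideals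
of `F` such that `∑ i, L i I = log N(I)` for every nonzero fractional ideal `I`, and for
every `α ∈ Fˣ` there are a totally positive unit `ε` of `𝓞 F` and `m ≥ 1` with
`L i ((α)) = log |ι_i(α)| + (1/m) log ι_i(ε)` for every real embedding `ι_i`. -/
theorem exists_log_emb_fractionalIdeal (F : Type*) [Field F] [NumberField F] (n : ℕ)
    (hdeg : Module.finrank ℚ F = n)
    (emb : Fin n → (F →+* ℝ)) (hemb : Function.Bijective emb) :
    ∃ L : Fin n → (FractionalIdeal (𝓞 F)⁰ F)ˣ → ℝ,
      (∀ i, ∀ I J : (FractionalIdeal (𝓞 F)⁰ F)ˣ, L i (I * J) = L i I + L i J) ∧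
      (∀ I : (FractionalIdeal (𝓞 F)⁰ F)ˣ,
        ∑ i, L i I = Real.log ((FractionalIdeal.absNorm (I : FractionalIdeal (𝓞 F)⁰ F) : ℝ))) ∧
      (∀ (α : F), α ≠ 0 → ∀ U : (FractionalIdeal (𝓞 F)⁰ F)ˣ,
        (U : FractionalIdeal (𝓞 F)⁰ F) = FractionalIdeal.spanSingleton (𝓞 F)⁰ α →
        ∃ (ε : (𝓞 F)ˣ) (m : ℕ), 0 < m ∧
          (∀ i, 0 < emb i ((ε : 𝓞 F) : F)) ∧
          (∀ i, L i U = Real.log |emb i α|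
            + (1 / (m : ℝ)) * Real.log (emb i ((ε : 𝓞 F) : F)))) := by
  have hcard : Fintype.card (Fin n) = Module.finrank ℚ F := by rw [Fintype.card_fin, hdeg]
  obtain ⟨s, hs⟩ :=
    (unitLogSpan emb).mkQ.exists_rightInverse_of_surjective (Submodule.range_mkQ _)
  have hsection : ∀ q, (unitLogSpan emb).mkQ (s q) = q := LinearMap.congr_fun hs
  refine ⟨fun i I => s (idealLog emb I) i, fun i I J => ?_, fun I => ?_, fun α _ U hU => ?_⟩
  · simp only [idealLog_mul, map_add, Pi.add_apply]
  · exact sum_eq_log_absNorm_of_mkQ_eq_idealLog hemb hcard (hsection _)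
  · exact exists_unit_of_mkQ_eq_mkQ_logAbsVec emb
      (by rw [hsection, idealLog_of_eq_spanSingleton emb hU])
end

section
/- Let F be a totally real number field of degree n ≥ 2 with real embeddings ι₁,…,ι_n, let r ≥ 2, and let v = (v_1,…,v_r) ∈ F^r satisfy v_p ≠ 0 for all p and ι_i(v_q)ι_k(v_p) ≠ ι_i(v_p)ι_k(v_q) for all i ≠ k and p ≠ q. Then for every nonzero α ∈ F and every x = (x_1,…,x_r) ∈ ℝ^r, V(α^{−1}v, x) − V(v, x) = ( (1/n) Σ_{k=1}^n log|ι_k(α)| − log|ι₁(α)| ) · ( ζ_fml(0, (ι₁(v_q))_{q=1}^r, x) − (1/n) Σ_{k=1}^n ζ_fml(0, (ι_k(v_q))_{q=1}^r, x) ), where α^{−1}v = (α^{−1}v_1,…,α^{−1}v_r). In particular, when α is totally positive this equals ((1/n) log N(α) − log ι₁(α)) times the second factor, N(α) = Π_k ι_k(α) being the norm. -/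
open scoped BigOperators

/-- The `V`-term of the paper, for a totally real field `F` of degree `n + 1` whose real
embeddings are enumerated by `emb : Fin (n+1) → (F →+* ℝ)` (with `ι₁ = emb 0`), a vector
`v : Fin (s+1) → F` of nonzero elements, and `x : Fin (s+1) → ℝ`:
`V(v,x) = -(1/n) ∑_{k ≠ 0} ∑_p ζ_fml(-1, (ι₁(v_q)/ι₁(v_p) - ι_k(v_q)/ι_k(v_p))_{q≠p}, (x_q)_{q≠p})
  · log|ι₁(v_p)/ι_k(v_p)|
  + (1/n²) ∑_{i < k} ∑_p ζ_fml(-1, (ι_i(v_q)/ι_i(v_p) - ι_k(v_q)/ι_k(v_p))_{q≠p}, (x_q)_{q≠p})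
  · log|ι_i(v_p)/ι_k(v_p)|`. -/
noncomputable def Vterm {F : Type*} [Field F] {n s : ℕ} (emb : Fin (n + 1) → (F →+* ℝ))
    (v : Fin (s + 1) → F) (x : Fin (s + 1) → ℝ) : ℝ :=
  -(1 / (n + 1 : ℝ)) *
      ∑ k ∈ Finset.univ.filter (fun k : Fin (n + 1) => k ≠ 0), ∑ p : Fin (s + 1),
        zetaFml 2
          (fun q : Fin s =>
            emb 0 (v (p.succAbove q)) / emb 0 (v p) - emb k (v (p.succAbove q)) / emb k (v p))
          (fun q : Fin s => x (p.succAbove q))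
        * Real.log |emb 0 (v p) / emb k (v p)|
    + (1 / (n + 1 : ℝ) ^ 2) *
      ∑ i : Fin (n + 1), ∑ k ∈ Finset.univ.filter (fun k : Fin (n + 1) => i < k),
        ∑ p : Fin (s + 1),
          zetaFml 2
            (fun q : Fin s =>
              emb i (v (p.succAbove q)) / emb i (v p) - emb k (v (p.succAbove q)) / emb k (v p))
            (fun q : Fin s => x (p.succAbove q))
          * Real.log |emb i (v p) / emb k (v p)|

/-- The nondegeneracy (cross-ratio) condition
`ι_i(w_q)ι_k(w_p) ≠ ι_i(w_p)ι_k(w_q)` for all `i ≠ k` and `p ≠ q`. -/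
def Nondeg {F : Type*} [Field F] {n s : ℕ} (emb : Fin n → (F →+* ℝ))
    (w : Fin s → F) : Prop :=
  ∀ i k : Fin n, i ≠ k → ∀ p q : Fin s, p ≠ q →
    emb i (w q) * emb k (w p) ≠ emb i (w p) * emb k (w q)

/-!
Multiplying `v` by `α⁻¹` leaves the arguments `ι_i(v_q)/ι_i(v_p) - ι_k(v_q)/ι_k(v_p)` unchanged and
shifts `log|ι_i(v_p)/ι_k(v_p)|` by `log|ι_k α| - log|ι_i α|`, so for each pair `(i, k)` the change
is that shift times `∑_p ζ_fml(-1, …)`. With `a = ι_i v` and `b = ι_k v`, this sum equals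
`ζ_fml(0, b, x) - ζ_fml(0, a, x)` by a partial-fraction argument: the polynomial
`y ↦ ∑_{|l| = r} ∏_q B_{l_q}(x_q)/l_q! (a_q y + b_q)^{l_q}` has degree `≤ r`, so it is determined by
its `y^r`-coefficient and its values at the `r` roots `-b_p/a_p` (distinct by the cross-ratio
hypothesis). At `-b_p/a_p` only the multi-indices with `l_p = 0` survive, which gives the `p`-th
`ζ_fml(-1, …)`; the `y^r`-coefficient and the value at `y = 0` give `ζ_fml(0, a, x)` and
`ζ_fml(0, b, x)`. What remains is a covariance-type double sum over pairs of embeddings, which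
factors as claimed.
-/

open Finset Polynomial

namespace Lagrange

variable {K ι : Type*} [Field K] [DecidableEq ι] {s : Finset ι} {v : ι → K}

theorem eval_eq_eval_nodal_mul_of_natDegree_le (hvs : Set.InjOn v s) {f : K[X]}
    (hf : f.natDegree ≤ #s) {x : K} (hx : ∀ i ∈ s, x ≠ v i) :
    f.eval x = (nodal s v).eval x *
      (f.coeff #s + ∑ i ∈ s, nodalWeight s v i * (x - v i)⁻¹ * f.eval (v i)) := by
  set g := f - C (f.coeff #s) * nodal s v with hg_def
  have hg : g.degree < #s := by
    rw [degree_lt_iff_coeff_zero]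
    intro m hm
    rcases hm.eq_or_lt with rfl | hm
    · rw [coeff_sub, coeff_C_mul, ← natDegree_nodal (v := v), nodal_monic.coeff_natDegree,
        mul_one, sub_self]
    · rw [coeff_sub, coeff_C_mul, coeff_eq_zero_of_natDegree_lt (hf.trans_lt hm),
        coeff_eq_zero_of_natDegree_lt (p := nodal s v) (by rwa [natDegree_nodal]), mul_zero,
        sub_zero]
  have hgv : ∀ i ∈ s, g.eval (v i) = f.eval (v i) := fun i hi => by
    rw [hg_def, eval_sub, eval_mul, eval_nodal_at_node hi, mul_zero, sub_zero]
  have := congrArg (eval x) (eq_interpolate_of_eval_eq _ hvs hg hgv)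
  rw [eval_interpolate_not_at_node _ hx, hg_def, eval_sub, eval_mul, eval_C] at this
  linear_combination this

end Lagrange

theorem Polynomial.coeff_prod_of_natDegree_le_sum {R ι : Type*} [CommSemiring R] (s : Finset ι)
    (f : ι → R[X]) (d : ι → ℕ) (h : ∀ i ∈ s, (f i).natDegree ≤ d i) :
    (∏ i ∈ s, f i).coeff (∑ i ∈ s, d i) = ∏ i ∈ s, (f i).coeff (d i) := by
  classical
  induction s using Finset.induction_on with
  | empty => simp
  | insert j s hj ih =>
    rw [prod_insert hj, sum_insert hj, prod_insert hj,
      coeff_mul_add_eq_of_natDegree_le (h j (mem_insert_self j s)),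
      ih fun i hi => h i (mem_insert_of_mem hi)]
    exact (natDegree_prod_le _ _).trans (sum_le_sum fun i hi => h i (mem_insert_of_mem hi))

/-- The coefficient of `t^N` in `∏ᵢ ∑ₗ βᵢ(l) (wᵢ t)^l`. -/
def homogeneousSum {R : Type*} [CommSemiring R] {r : ℕ} (β : Fin r → ℕ → R) (w : Fin r → R)
    (N : ℕ) : R :=
  ∑ l ∈ Nat.antidiagonalTuple r N, ∏ i, β i (l i) * w i ^ l i

section homogeneousSum

variable {R : Type*} [CommSemiring R] {r : ℕ}

theorem map_homogeneousSum {S : Type*} [CommSemiring S] (φ : R →+* S) (β : Fin r → ℕ → R)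
    (w : Fin r → R) (N : ℕ) :
    φ (homogeneousSum β w N) = homogeneousSum (fun i l => φ (β i l)) (fun i => φ (w i)) N := by
  simp [homogeneousSum, map_sum, map_prod]

theorem homogeneousSum_const_mul (β : Fin r → ℕ → R) (c : R) (w : Fin r → R) (N : ℕ) :
    homogeneousSum β (fun i => c * w i) N = c ^ N * homogeneousSum β w N := by
  rw [homogeneousSum, homogeneousSum, mul_sum]
  refine sum_congr rfl fun l hl => ?_
  rw [← (Nat.mem_antidiagonalTuple.mp hl), ← prod_pow_eq_pow_sum, ← prod_mul_distrib]
  exact prod_congr rfl fun i _ => by ring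

theorem homogeneousSum_eq_succAbove_of_eq_zero {β : Fin (r + 1) → ℕ → R} {w : Fin (r + 1) → R}
    (p : Fin (r + 1)) (hβ : β p 0 = 1) (hw : w p = 0) (N : ℕ) :
    homogeneousSum β w N
      = homogeneousSum (fun q => β (p.succAbove q)) (fun q => w (p.succAbove q)) N := by
  refine (sum_of_injOn (p.insertNth 0) (Fin.insertNth_right_injective 0).injOn ?_ ?_ ?_).symm
  · intro l hl
    simpa [Nat.mem_antidiagonalTuple] using hl
  · intro l hmem hl
    rw [Nat.mem_antidiagonalTuple] at hmem
    have hlp : l p ≠ 0 := fun h => hl ⟨p.removeNth l,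
      by rw [mem_coe, Nat.mem_antidiagonalTuple, ← hmem, ← Fin.add_sum_removeNth p, h, zero_add],
      by rw [← h, Fin.insertNth_self_removeNth]⟩
    exact prod_eq_zero (mem_univ p) (by rw [hw, zero_pow hlp, mul_zero])
  · intro l _
    rw [Fin.prod_univ_succAbove _ p]
    simp [hβ]

end homogeneousSum

section linear

variable {R : Type*} [CommSemiring R] {r : ℕ}

theorem natDegree_C_mul_linear_pow_le (c a b : R) (l : ℕ) :
    (C c * (C a * X + C b) ^ l).natDegree ≤ l :=
  (natDegree_C_mul_le _ _).trans <|
    (natDegree_pow_le_of_le l natDegree_linear_le).trans (mul_one l).le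

theorem coeff_C_mul_linear_pow (c a b : R) (l : ℕ) :
    (C c * (C a * X + C b) ^ l).coeff l = c * a ^ l := by
  have h := coeff_pow_of_natDegree_le (m := l) (natDegree_linear_le (a := a) (b := b))
  rw [mul_one] at h
  rw [coeff_C_mul, h]
  simp

variable (β : Fin r → ℕ → R) (a b : Fin r → R) (N : ℕ)

theorem natDegree_homogeneousSum_linear_le :
    (homogeneousSum (fun i l => C (β i l)) (fun i => C (a i) * X + C (b i)) N).natDegree ≤ N := by
  refine natDegree_sum_le_of_forall_le _ _ fun l hl => ?_
  rw [← Nat.mem_antidiagonalTuple.mp hl]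
  exact (natDegree_prod_le _ _).trans
    (sum_le_sum fun i _ => natDegree_C_mul_linear_pow_le _ _ _ _)

theorem coeff_homogeneousSum_linear :
    (homogeneousSum (fun i l => C (β i l)) (fun i => C (a i) * X + C (b i)) N).coeff N
      = homogeneousSum β a N := by
  rw [homogeneousSum, finsetSum_coeff]
  refine sum_congr rfl fun l hl => ?_
  rw [← Nat.mem_antidiagonalTuple.mp hl,
    coeff_prod_of_natDegree_le_sum _ _ _ fun i _ => natDegree_C_mul_linear_pow_le _ _ _ _]
  exact prod_congr rfl fun i _ => coeff_C_mul_linear_pow _ _ _ _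

theorem eval_homogeneousSum_linear (y : R) :
    (homogeneousSum (fun i l => C (β i l)) (fun i => C (a i) * X + C (b i)) N).eval y
      = homogeneousSum β (fun i => a i * y + b i) N := by
  rw [← coe_evalRingHom, map_homogeneousSum]
  simp

end linear

theorem Fin.prod_univ_erase {M : Type*} [CommMonoid M] {n : ℕ} (f : Fin (n + 1) → M)
    (p : Fin (n + 1)) : ∏ i ∈ univ.erase p, f i = ∏ i, f (p.succAbove i) := by
  rw [Fin.univ_succAbove _ p, erase_cons, prod_map]
  rfl

section partialFractions

variable {K : Type*} [Field K]

theorem div_sub_div_ne_zero {a b a' b' : K} (ha : a ≠ 0) (hb : b ≠ 0)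
    (h : a' * b ≠ a * b') : a' / a - b' / b ≠ 0 := by
  rw [sub_ne_zero, ne_eq, div_eq_div_iff ha hb]
  exact fun h' => h (by linear_combination h')

theorem mul_neg_div_add_eq {a b : K} (ha : a ≠ 0) (hb : b ≠ 0) (a' b' : K) :
    a' * (-b / a) + b' = -b * (a' / a - b' / b) := by
  field_simp
  ring

variable {s : ℕ} {a b : Fin (s + 1) → K}

theorem homogeneousSum_linear_at_root {β : Fin (s + 1) → ℕ → K} (hβ : ∀ i, β i 0 = 1)
    (ha : ∀ i, a i ≠ 0) (hb : ∀ i, b i ≠ 0) (p : Fin (s + 1)) (N : ℕ) :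
    homogeneousSum β (fun i => a i * (-b p / a p) + b i) N = (-b p) ^ N *
      homogeneousSum (fun q => β (p.succAbove q))
        (fun q => a (p.succAbove q) / a p - b (p.succAbove q) / b p) N := by
  rw [homogeneousSum_eq_succAbove_of_eq_zero p (hβ p) (by field_simp [ha p]; ring),
    ← homogeneousSum_const_mul]
  simp only [mul_neg_div_add_eq (ha p) (hb p)]

theorem nodalWeight_neg_div (ha : ∀ i, a i ≠ 0) (hb : ∀ i, b i ≠ 0) (p : Fin (s + 1)) :
    Lagrange.nodalWeight univ (fun i => -b i / a i) p = (∏ q, a (p.succAbove q)) /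
      ((-b p) ^ s * ∏ q, (a (p.succAbove q) / a p - b (p.succAbove q) / b p)) := by
  have h : ∀ q, (-b p / a p - -b (p.succAbove q) / a (p.succAbove q))⁻¹
      = a (p.succAbove q) / (-b p * (a (p.succAbove q) / a p - b (p.succAbove q) / b p)) :=
    fun q => by
    rw [← mul_neg_div_add_eq (ha p) (hb p), ← div_mul_cancel_left₀ (ha (p.succAbove q))]
    congr 2
    field_simp [ha (p.succAbove q)]
    ring
  rw [Lagrange.nodalWeight, Fin.prod_univ_erase, prod_congr rfl fun q _ => h q,
    prod_div_distrib, prod_mul_distrib, prod_const, card_univ, Fintype.card_fin]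

theorem homogeneousSum_div_prod_sub_div_prod {β : Fin (s + 1) → ℕ → K} (hβ : ∀ i, β i 0 = 1)
    (ha : ∀ i, a i ≠ 0) (hb : ∀ i, b i ≠ 0) (hab : ∀ p q, p ≠ q → a q * b p ≠ a p * b q) :
    homogeneousSum β a (s + 1) / ∏ i, a i - homogeneousSum β b (s + 1) / ∏ i, b i
      = ∑ p, homogeneousSum (fun q => β (p.succAbove q))
            (fun q => a (p.succAbove q) / a p - b (p.succAbove q) / b p) (s + 1)
          / ∏ q, (a (p.succAbove q) / a p - b (p.succAbove q) / b p) := by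
  have hroots : Set.InjOn (fun i => -b i / a i) (univ : Finset (Fin (s + 1))) :=
    fun p _ q _ h => by
    by_contra hpq
    rw [div_eq_div_iff (ha p) (ha q)] at h
    exact hab p q hpq (by linear_combination -h)
  have key := Lagrange.eval_eq_eval_nodal_mul_of_natDegree_le hroots
    (by simpa using natDegree_homogeneousSum_linear_le β a b (s + 1)) (x := 0)
    (fun p _ => (div_ne_zero (neg_ne_zero.2 (hb p)) (ha p)).symm)
  rw [card_univ, Fintype.card_fin, coeff_homogeneousSum_linear, Lagrange.eval_nodal] at key
  simp only [eval_homogeneousSum_linear, homogeneousSum_linear_at_root hβ ha hb,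
    nodalWeight_neg_div ha hb, mul_zero, zero_add] at key
  have hterm : ∀ p (H : K), (∏ q, a (p.succAbove q)) /
      ((-b p) ^ s * ∏ q, (a (p.succAbove q) / a p - b (p.succAbove q) / b p)) *
        (0 - -b p / a p)⁻¹ * ((-b p) ^ (s + 1) * H)
      = -(∏ i, a i) * (H / ∏ q, (a (p.succAbove q) / a p - b (p.succAbove q) / b p)) :=
    fun p H => by
    have := prod_ne_zero_iff.2 fun q (_ : q ∈ univ) =>
      div_sub_div_ne_zero (ha p) (hb p) (hab p _ (Fin.succAbove_ne p q).symm)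
    rw [Fin.prod_univ_succAbove a p]
    field_simp [ha p, hb p]
    ring
  have hnodal : ∏ i, (0 - -b i / a i) = (∏ i, b i) / ∏ i, a i := by
    rw [← prod_div_distrib]
    exact prod_congr rfl fun i _ => by ring
  simp only [hterm, ← mul_sum, hnodal] at key
  have hA := prod_ne_zero_iff.2 fun i (_ : i ∈ univ) => ha i
  have hB := prod_ne_zero_iff.2 fun i (_ : i ∈ univ) => hb i
  rw [div_sub_div _ _ hA hB, div_eq_iff (mul_ne_zero hA hB)]
  change homogeneousSum β b (s + 1) = _ at key
  field_simp at key
  linear_combination -key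

end partialFractions

noncomputable def bernoulliCoeff {r : ℕ} (x : Fin r → ℝ) (i : Fin r) (l : ℕ) : ℝ :=
  aeval (x i) (Polynomial.bernoulli l) / l.factorial

theorem bernoulliCoeff_zero {r : ℕ} (x : Fin r → ℝ) (i : Fin r) : bernoulliCoeff x i 0 = 1 := by
  simp [bernoulliCoeff]

theorem bernoulliCoeff_comp {r k : ℕ} (x : Fin r → ℝ) (f : Fin k → Fin r) :
    bernoulliCoeff (fun q => x (f q)) = fun q => bernoulliCoeff x (f q) :=
  rfl

theorem zetaFml_eq_homogeneousSum (m : ℕ) {r : ℕ} {a : Fin r → ℝ} (ha : ∀ i, a i ≠ 0)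
    (x : Fin r → ℝ) :
    zetaFml m a x = (-1) ^ r * (m - 1).factorial *
      (homogeneousSum (bernoulliCoeff x) a (m + r - 1) / ∏ i, a i) := by
  rw [zetaFml, homogeneousSum, sum_div]
  congr 1
  refine sum_congr rfl fun l _ => ?_
  rw [← prod_div_distrib]
  refine prod_congr rfl fun i _ => ?_
  rw [zpow_sub_one₀ (ha i), zpow_natCast, bernoulliCoeff]
  ring

theorem sum_zetaFml_two_eq_sub {s : ℕ} {a b : Fin (s + 1) → ℝ} (ha : ∀ i, a i ≠ 0)
    (hb : ∀ i, b i ≠ 0) (hab : ∀ p q, p ≠ q → a q * b p ≠ a p * b q) (x : Fin (s + 1) → ℝ) :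
    ∑ p : Fin (s + 1),
      zetaFml 2 (fun q : Fin s => a (p.succAbove q) / a p - b (p.succAbove q) / b p)
        (fun q : Fin s => x (p.succAbove q))
      = zetaFml 1 b x - zetaFml 1 a x := by
  have hc : ∀ p q, a (p.succAbove q) / a p - b (p.succAbove q) / b p ≠ 0 := fun p q =>
    div_sub_div_ne_zero (ha p) (hb p) (hab p _ (Fin.succAbove_ne p q).symm)
  rw [sum_congr rfl fun p _ => zetaFml_eq_homogeneousSum 2 (hc p) _,
    zetaFml_eq_homogeneousSum 1 hb, zetaFml_eq_homogeneousSum 1 ha, ← mul_sum,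
    show 2 + s - 1 = s + 1 by omega, show 1 + (s + 1) - 1 = s + 1 by omega]
  simp only [bernoulliCoeff_comp]
  rw [← homogeneousSum_div_prod_sub_div_prod (bernoulliCoeff_zero x) ha hb hab]
  simp only [show (2 - 1).factorial = 1 from rfl, show (1 - 1).factorial = 1 from rfl,
    Nat.cast_one, pow_succ]
  ring

section covariance

variable {R ι : Type*} [Fintype ι] [LinearOrder ι]

theorem two_mul_sum_sum_filter_lt [CommRing R] {h : ι → ι → R} (hsymm : ∀ i k, h i k = h k i)
    (hdiag : ∀ i, h i i = 0) :
    2 * ∑ i, ∑ k ∈ univ.filter (fun k => i < k), h i k = ∑ i, ∑ k, h i k := by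
  have hsplit : ∀ i k, h i k = (if i < k then h i k else 0) + (if k < i then h k i else 0) :=
    fun i k => by
    rcases lt_trichotomy i k with hik | rfl | hik
    · simp [hik, hik.not_gt]
    · simp [hdiag]
    · simp [hik, hik.not_gt, hsymm i k]
  simp_rw [sum_filter]
  rw [two_mul, sum_congr rfl fun i _ => sum_congr rfl fun k _ => hsplit i k]
  simp only [sum_add_distrib]
  rw [sum_comm (f := fun i k => if k < i then h k i else 0)]

theorem sum_sum_filter_lt_sub_mul_sub [Field R] [CharZero R] (f g : ι → R) :
    ∑ i, ∑ k ∈ univ.filter (fun k => i < k), (f k - f i) * (g k - g i)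
      = Fintype.card ι * ∑ i, f i * g i - (∑ i, f i) * ∑ i, g i := by
  refine mul_left_cancel₀ (two_ne_zero (α := R)) ?_
  rw [two_mul_sum_sum_filter_lt (fun i k => by ring) (fun i => by ring)]
  simp only [mul_sub, sub_mul, sum_sub_distrib, ← sum_mul, ← mul_sum, sum_const, card_univ,
    nsmul_eq_mul, mul_assoc]
  ring

end covariance

theorem pairSums_sub_mul_sub_eq_mul {R : Type*} [Field R] [CharZero R]
    {m : ℕ} (ζ L : Fin (m + 1) → R) :
    -(1 / (m + 1 : R)) * ∑ k ∈ univ.filter (fun k => k ≠ 0), (ζ k - ζ 0) * (L k - L 0)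
      + (1 / (m + 1 : R) ^ 2) * ∑ i, ∑ k ∈ univ.filter (fun k => i < k), (ζ k - ζ i) * (L k - L i)
      = ((1 / (m + 1 : R)) * ∑ k, L k - L 0) * (ζ 0 - (1 / (m + 1 : R)) * ∑ k, ζ k) := by
  rw [sum_filter_of_ne fun k _ hk => by rintro rfl; simp at hk, sum_sum_filter_lt_sub_mul_sub]
  simp only [mul_sub, sub_mul, sum_sub_distrib, ← sum_mul, ← mul_sum, sum_const, card_univ,
    Fintype.card_fin, nsmul_eq_mul]
  field_simp
  push_cast
  ring

section Vterm

variable {F : Type*} [Field F]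

noncomputable def pairTerm {s : ℕ} (σ τ : F →+* ℝ) (v : Fin (s + 1) → F)
    (x : Fin (s + 1) → ℝ) : ℝ :=
  ∑ p : Fin (s + 1),
    zetaFml 2
      (fun q : Fin s => σ (v (p.succAbove q)) / σ (v p) - τ (v (p.succAbove q)) / τ (v p))
      (fun q : Fin s => x (p.succAbove q))
    * Real.log |σ (v p) / τ (v p)|

theorem Vterm_eq_pairTerm {n s : ℕ} (emb : Fin (n + 1) → (F →+* ℝ)) (v : Fin (s + 1) → F)
    (x : Fin (s + 1) → ℝ) :
    Vterm emb v x =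
      -(1 / (n + 1 : ℝ)) * ∑ k ∈ univ.filter (fun k => k ≠ 0), pairTerm (emb 0) (emb k) v x
        + (1 / (n + 1 : ℝ) ^ 2) *
          ∑ i, ∑ k ∈ univ.filter (fun k => i < k), pairTerm (emb i) (emb k) v x :=
  rfl

theorem pairTerm_inv_mul {s : ℕ} {σ τ : F →+* ℝ} {v : Fin (s + 1) → F} (hv : ∀ p, v p ≠ 0)
    (hστ : ∀ p q, p ≠ q → σ (v q) * τ (v p) ≠ σ (v p) * τ (v q)) {α : F} (hα : α ≠ 0)
    (x : Fin (s + 1) → ℝ) :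
    pairTerm σ τ (fun p => α⁻¹ * v p) x = pairTerm σ τ v x +
      (zetaFml 1 (fun q => τ (v q)) x - zetaFml 1 (fun q => σ (v q)) x) *
        (Real.log |τ α| - Real.log |σ α|) := by
  have hratio : ∀ (ρ : F →+* ℝ) p q, ρ (α⁻¹ * v q) / ρ (α⁻¹ * v p) = ρ (v q) / ρ (v p) :=
    fun ρ p q => by
    rw [map_mul, map_mul, mul_div_mul_left _ _ ((map_ne_zero ρ).2 (inv_ne_zero hα))]
  have hlog : ∀ p, Real.log |σ (α⁻¹ * v p) / τ (α⁻¹ * v p)|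
      = Real.log |σ (v p) / τ (v p)| + (Real.log |τ α| - Real.log |σ α|) := fun p => by
    have hne : ∀ (ρ : F →+* ℝ) {y : F}, y ≠ 0 → |ρ y| ≠ 0 := fun ρ y hy =>
      abs_ne_zero.2 ((map_ne_zero ρ).2 hy)
    rw [map_mul, map_mul, map_inv₀, map_inv₀, abs_div, abs_mul, abs_mul, abs_inv, abs_inv,
      Real.log_div (mul_ne_zero (inv_ne_zero (hne σ hα)) (hne σ (hv p)))
        (mul_ne_zero (inv_ne_zero (hne τ hα)) (hne τ (hv p))),
      Real.log_mul (inv_ne_zero (hne σ hα)) (hne σ (hv p)),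
      Real.log_mul (inv_ne_zero (hne τ hα)) (hne τ (hv p)), Real.log_inv, Real.log_inv, abs_div,
      Real.log_div (hne σ (hv p)) (hne τ (hv p))]
    ring
  rw [← sum_zetaFml_two_eq_sub (fun p => (map_ne_zero σ).2 (hv p))
    (fun p => (map_ne_zero τ).2 (hv p)) hστ x, sum_mul, pairTerm, pairTerm, ← sum_add_distrib]
  refine sum_congr rfl fun p _ => ?_
  simp only [hratio, hlog]
  ring

theorem Vterm_inv_mul_sub {n s : ℕ} (emb : Fin (n + 1) → (F →+* ℝ)) {v : Fin (s + 1) → F}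
    (hv : ∀ p, v p ≠ 0) (hnd : Nondeg emb v) {α : F} (hα : α ≠ 0) (x : Fin (s + 1) → ℝ) :
    Vterm emb (fun p => α⁻¹ * v p) x - Vterm emb v x
      = ((1 / (n + 1 : ℝ)) * ∑ k, Real.log |emb k α| - Real.log |emb 0 α|)
        * (zetaFml 1 (fun q => emb 0 (v q)) x
            - (1 / (n + 1 : ℝ)) * ∑ k, zetaFml 1 (fun q => emb k (v q)) x) := by
  have h := fun i k (hik : i ≠ k) => pairTerm_inv_mul hv (hnd i k hik) hα x
  rw [Vterm_eq_pairTerm, Vterm_eq_pairTerm,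
    sum_congr rfl fun k hk => h 0 k (mem_filter.1 hk).2.symm,
    sum_congr rfl fun i _ => sum_congr rfl fun k hk => h i k (mem_filter.1 hk).2.ne,
    ← pairSums_sub_mul_sub_eq_mul
      (fun k => zetaFml 1 (fun q => emb k (v q)) x) (fun k => Real.log |emb k α|)]
  simp only [sum_add_distrib]
  ring

end Vterm

theorem Vterm_scaling_general {F : Type*} [Field F] (n : ℕ)
    (emb : Fin (n + 2) → (F →+* ℝ))
    (r : ℕ) (v : Fin (r + 2) → F) (hv : ∀ p, v p ≠ 0)
    (hnd : Nondeg emb v)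
    (α : F) (hα : α ≠ 0) (x : Fin (r + 2) → ℝ) :
    (Vterm emb (fun p => α⁻¹ * v p) x - Vterm emb v x
      = ((1 / (n + 2 : ℝ)) * ∑ k : Fin (n + 2), Real.log |emb k α| - Real.log |emb 0 α|)
        * (zetaFml 1 (fun q => emb 0 (v q)) x
            - (1 / (n + 2 : ℝ)) * ∑ k : Fin (n + 2), zetaFml 1 (fun q => emb k (v q)) x))
    ∧ ((∀ k, 0 < emb k α) →
      Vterm emb (fun p => α⁻¹ * v p) x - Vterm emb v x
        = ((1 / (n + 2 : ℝ)) * Real.log (∏ k : Fin (n + 2), emb k α) - Real.log (emb 0 α))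
          * (zetaFml 1 (fun q => emb 0 (v q)) x
              - (1 / (n + 2 : ℝ)) * ∑ k : Fin (n + 2), zetaFml 1 (fun q => emb k (v q)) x)) := by
  have hdiff := Vterm_inv_mul_sub emb hv hnd hα x
  rw [show ((n + 1 : ℕ) : ℝ) + 1 = n + 2 by push_cast; ring] at hdiff
  refine ⟨hdiff, fun hpos => ?_⟩
  rw [hdiff, Real.log_prod fun k _ => (hpos k).ne']
  simp only [abs_of_pos (hpos _)]

/-- behaviour of the `V`-term under scaling of the basis vector by `α⁻¹`.
The totally real field `F` of degree `n + 2 ≥ 2` has all its real embeddings enumerated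
bijectively by `emb`, with `ι₁ = emb 0`. -/
theorem Vterm_scaling {F : Type*} [Field F] [NumberField F] (n : ℕ)
    (hdeg : Module.finrank ℚ F = n + 2)
    (emb : Fin (n + 2) → (F →+* ℝ)) (hemb : Function.Bijective emb)
    (r : ℕ) (v : Fin (r + 2) → F) (hv : ∀ p, v p ≠ 0)
    (hnd : Nondeg emb v)
    (α : F) (hα : α ≠ 0) (x : Fin (r + 2) → ℝ) :
    (Vterm emb (fun p => α⁻¹ * v p) x - Vterm emb v x
      = ((1 / (n + 2 : ℝ)) * ∑ k : Fin (n + 2), Real.log |emb k α| - Real.log |emb 0 α|)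
        * (zetaFml 1 (fun q => emb 0 (v q)) x
            - (1 / (n + 2 : ℝ)) * ∑ k : Fin (n + 2), zetaFml 1 (fun q => emb k (v q)) x))
    ∧ ((∀ k, 0 < emb k α) →
      Vterm emb (fun p => α⁻¹ * v p) x - Vterm emb v x
        = ((1 / (n + 2 : ℝ)) * Real.log (∏ k : Fin (n + 2), emb k α) - Real.log (emb 0 α))
          * (zetaFml 1 (fun q => emb 0 (v q)) x
              - (1 / (n + 2 : ℝ)) * ∑ k : Fin (n + 2), zetaFml 1 (fun q => emb k (v q)) x)) :=
  Vterm_scaling_general n emb r v hv hnd α hα x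
end
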